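/- arXiv:2005.10930 — 10 statements merged into one kernel-verified Lean document; each statement's English description precedes it below -/
import Mathlib

section
/- Let p be a log-concave probability mass function on ℤ and let α ∈ (0,∞). Then H_α(p) − H_∞(p) < log(α^{1/(α−1)}), where for α = 1 the right-hand side is interpreted as log e = 1 (natural logarithm). In particular, for the Shannon entropy, H(p) − H_∞(p) < 1. -/
open Real

/-- `p` is a probability mass function on `ℤ`. -/
def IsPMF (p : ℤ → ℝ) : Prop :=
  (∀ n, 0 ≤ p n) ∧ Summable p ∧ ∑' n, p n = 1

/-- `p` is log-concave: `p(n)² ≥ p(n−1)·p(n+1)` and contiguous support. -/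
def IsLogConcavePMF (p : ℤ → ℝ) : Prop :=
  (∀ n : ℤ, p (n - 1) * p (n + 1) ≤ p n ^ 2) ∧
  (∀ a b c : ℤ, a ≤ b → b ≤ c → 0 < p a → 0 < p c → 0 < p b)

/-- Rényi entropy of order `α > 0` (Shannon entropy at `α = 1`), natural logarithm. -/
noncomputable def renyiEnt (α : ℝ) (p : ℤ → ℝ) : ℝ :=
  if α = 1 then -∑' n, p n * Real.log (p n)
  else (1 - α)⁻¹ * Real.log (∑' n, p n ^ α)

/-- Min-entropy `H_∞(p) = −log sup_n p(n)`. -/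
noncomputable def minEnt (p : ℤ → ℝ) : ℝ := -Real.log (⨆ n, p n)

/-! Split `p` at a mode `m` into the tails `k ↦ p (m + k)` and `k ↦ p (m - k)`, which are
log-concave sequences on `ℕ`. Compare a tail `q` with the geometric sequence `g k = q 0 * t ^ k` of
the same head and mass: log-concavity forces `q - g` to change sign exactly once, from `+` to `-`,
so for convex `φ` with `φ 0 = 0` the tangent-line inequality at `g` and Abel summation give
`∑ φ ∘ g ≤ ∑ φ ∘ q`. For `φ x = x ^ α / (α - 1)` and `φ x = x * log x` the geometric sums are
explicit, and a one-variable inequality in `t` (positive second derivative, vanishing to second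
order at `t = 1`) makes the resulting bound strict. Adding the two tails, whose masses sum to
`1 + p m`, gives `p m ^ (α - 1) / (α - 1) < α / (α - 1) * ∑ p ^ α`, resp.
`log (p m) - 1 < ∑ p log p`, which is the claim. -/

open Set Filter Topology

structure IsLogConcaveSeq (q : ℕ → ℝ) : Prop where
  nonneg : ∀ k, 0 ≤ q k
  mul_le_sq : ∀ k, q k * q (k + 2) ≤ q (k + 1) ^ 2
  succ_eq_zero : ∀ k, q k = 0 → q (k + 1) = 0

namespace IsLogConcaveSeq

variable {q : ℕ → ℝ} {t : ℝ}

theorem mul_succ_le_succ_mul (hq : IsLogConcaveSeq q) {i l : ℕ} (hil : i ≤ l) :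
    q i * q (l + 1) ≤ q (i + 1) * q l := by
  induction l, hil using Nat.le_induction with
  | base => rw [mul_comm]
  | succ l hil ih =>
    rcases (hq.nonneg l).eq_or_lt with hl | hl
    · have hl1 := hq.succ_eq_zero l hl.symm
      simp [hl1, hq.succ_eq_zero _ hl1]
    · refine le_of_mul_le_mul_right ?_ hl
      calc q i * q (l + 1 + 1) * q l = q i * (q l * q (l + 2)) := by ring
        _ ≤ q i * q (l + 1) ^ 2 := mul_le_mul_of_nonneg_left (hq.mul_le_sq l) (hq.nonneg i)
        _ = q i * q (l + 1) * q (l + 1) := by ring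
        _ ≤ q (i + 1) * q l * q (l + 1) := mul_le_mul_of_nonneg_right ih (hq.nonneg _)
        _ = q (i + 1) * q (l + 1) * q l := by ring

theorem succ_le_mul_of_succ_lt_mul (hq : IsLogConcaveSeq q) {i l : ℕ} (hi : q (i + 1) < t * q i)
    (hil : i ≤ l) : q (l + 1) ≤ t * q l := by
  have hqi : 0 < q i := (hq.nonneg i).lt_of_ne fun h => by
    simp [← h] at hi; linarith [hq.nonneg (i + 1)]
  refine le_of_mul_le_mul_left ?_ hqi
  calc q i * q (l + 1) ≤ q (i + 1) * q l := hq.mul_succ_le_succ_mul hil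
    _ ≤ t * q i * q l := mul_le_mul_of_nonneg_right hi.le (hq.nonneg l)
    _ = q i * (t * q l) := by ring

theorem le_geometric_of_lt (hq : IsLogConcaveSeq q) (ht : 0 ≤ t) {j k : ℕ}
    (hj : q j < q 0 * t ^ j) (hjk : j ≤ k) : q k ≤ q 0 * t ^ k := by
  obtain ⟨i, hij, hi⟩ : ∃ i < j, q (i + 1) < t * q i := by
    by_contra! h
    exact hj.not_ge (by simpa [mul_comm] using geom_le ht j h)
  have hdecay := le_geom (u := fun n => q (j + n)) ht (k - j)
    fun n _ => hq.succ_le_mul_of_succ_lt_mul hi (hij.le.trans (Nat.le_add_right j n))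
  simp only [add_zero, Nat.add_sub_cancel' hjk] at hdecay
  calc q k ≤ t ^ (k - j) * q j := hdecay
    _ ≤ t ^ (k - j) * (q 0 * t ^ j) := mul_le_mul_of_nonneg_left hj.le (pow_nonneg ht _)
    _ = q 0 * t ^ k := by rw [mul_left_comm, ← pow_add, Nat.sub_add_cancel hjk]

theorem exists_sign_change (hq : IsLogConcaveSeq q) (ht : 0 ≤ t)
    (hd : HasSum (fun k => q k - q 0 * t ^ k) 0) :
    ∃ K, (∀ k < K, q 0 * t ^ k ≤ q k) ∧ ∀ k, K ≤ k → q k ≤ q 0 * t ^ k := by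
  by_cases hex : ∃ k, q k < q 0 * t ^ k
  · classical
    exact ⟨Nat.find hex, fun k hk => not_lt.mp (Nat.find_min hex hk),
      fun k hk => hq.le_geometric_of_lt ht (Nat.find_spec hex) hk⟩
  · push Not at hex
    have hzero := (hasSum_zero_iff_of_nonneg fun k => sub_nonneg.mpr (hex k)).mp hd
    exact ⟨0, by simp, fun k _ => (sub_eq_zero.mp (congrFun hzero k)).le⟩

end IsLogConcaveSeq

theorem tsum_mul_nonneg_of_antitone {w d : ℕ → ℝ} {K : ℕ} (hw : Antitone w) (hd : HasSum d 0)
    (hpos : ∀ k < K, 0 ≤ d k) (hneg : ∀ k, K ≤ k → d k ≤ 0)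
    (hwd : Summable fun k => w k * d k) : 0 ≤ ∑' k, w k * d k := by
  have h := hwd.hasSum.sub (hd.mul_left (w K))
  rw [mul_zero, sub_zero] at h
  refine h.nonneg fun k => ?_
  rw [← sub_mul]
  rcases lt_or_ge k K with hk | hk
  · exact mul_nonneg (sub_nonneg.mpr (hw hk.le)) (hpos k hk)
  · exact mul_nonneg_of_nonpos_of_nonpos (sub_nonpos.mpr (hw hk)) (hneg k hk)

theorem Summable.of_eventually_le_of_le {ι : Type*} {f l u : ι → ℝ} (hl : Summable l)
    (hu : Summable u) (hlf : ∀ᶠ i in cofinite, l i ≤ f i) (hfu : ∀ᶠ i in cofinite, f i ≤ u i) :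
    Summable f := by
  refine Summable.of_norm_bounded_eventually (hl.norm.add hu.norm) ?_
  filter_upwards [hlf, hfu] with i hli hui
  simp only [Real.norm_eq_abs]
  rw [abs_le]
  constructor <;> linarith [neg_abs_le (l i), le_abs_self (u i), abs_nonneg (l i), abs_nonneg (u i)]

theorem ConvexOn.add_mul_sub_le_of_hasDerivAt {S : Set ℝ} {f : ℝ → ℝ} {f' x y : ℝ}
    (hf : ConvexOn ℝ S f) (hx : x ∈ S) (hy : y ∈ S) (hd : HasDerivAt f f' y) :
    f y + f' * (x - y) ≤ f x := by
  rcases lt_trichotomy x y with hxy | rfl | hxy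
  · have h := hf.slope_le_of_hasDerivAt hx hy hxy hd
    rw [slope_def_field, div_le_iff₀ (sub_pos.mpr hxy)] at h
    linarith
  · simp
  · have h := hf.le_slope_of_hasDerivAt hy hx hxy hd
    rw [slope_def_field, le_div_iff₀ (sub_pos.mpr hxy)] at h
    linarith

theorem ConvexOn.monotoneOn_Ioi_of_hasDerivAt {f f' : ℝ → ℝ} (hf : ConvexOn ℝ (Ici 0) f)
    (hf' : ∀ x, 0 < x → HasDerivAt f (f' x) x) : MonotoneOn f' (Ioi 0) := fun x hx y hy hxy => by
  have h := (hf.subset Ioi_subset_Ici_self (convex_Ioi 0)).monotoneOn_deriv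
    (fun z hz => (hf' z hz).differentiableAt) hx hy hxy
  rwa [(hf' x hx).deriv, (hf' y hy).deriv] at h

theorem eq_mul_zero_pow_of_hasSum {q : ℕ → ℝ} (hq : ∀ k, 0 ≤ q k) (hmass : HasSum q (q 0))
    (k : ℕ) : q k = q 0 * 0 ^ k := by
  rcases k with _ | k
  · simp
  · have h := sum_le_hasSum {0, k + 1} (fun i _ => hq i) hmass
    rw [Finset.sum_pair (by omega)] at h
    simp [le_antisymm (by linarith) (hq (k + 1))]

theorem ConvexOn.le_mul_of_map_zero {f : ℝ → ℝ} (hf : ConvexOn ℝ (Ici 0) f) (h0 : f 0 = 0)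
    {x : ℝ} (hx0 : 0 ≤ x) (hx1 : x ≤ 1) : f x ≤ f 1 * x := by
  have h := hf.2 (x := 0) (y := 1) self_mem_Ici (by simp) (sub_nonneg.mpr hx1) hx0 (by ring)
  simpa [h0, mul_comm] using h

namespace IsLogConcaveSeq

variable {q : ℕ → ℝ} {t : ℝ}

theorem tsum_comp_geometric_le (hq : IsLogConcaveSeq q) (hq0 : 0 < q 0) (ht0 : 0 ≤ t)
    (ht1 : t < 1) (hmass : HasSum q (q 0 * (1 - t)⁻¹)) {φ φ' : ℝ → ℝ}
    (hφ : ConvexOn ℝ (Ici 0) φ) (hφ0 : φ 0 = 0) (hφ' : ∀ x, 0 < x → HasDerivAt φ (φ' x) x)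
    (hφg : Summable fun k => φ (q 0 * t ^ k))
    (hφ'g : Summable fun k => φ' (q 0 * t ^ k) * (q 0 * t ^ k)) :
    Summable (fun k => φ (q k)) ∧ ∑' k, φ (q 0 * t ^ k) ≤ ∑' k, φ (q k) := by
  rcases ht0.eq_or_lt with rfl | ht0
  -- for `t = 0` the mass condition makes `q` the geometric sequence itself
  · have hsingle := eq_mul_zero_pow_of_hasSum hq.nonneg (by simpa using hmass)
    simp only [← hsingle]
    exact ⟨hφg.congr fun k => by rw [← hsingle], le_rfl⟩
  set g := fun k : ℕ => q 0 * t ^ k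
  have hg_pos : ∀ k, 0 < g k := fun k => by positivity
  have hd : HasSum (fun k => q k - g k) 0 := by
    simpa using hmass.sub ((hasSum_geometric_of_lt_one ht0.le ht1).mul_left (q 0))
  obtain ⟨K, hK_le, hK_ge⟩ := hq.exists_sign_change ht0.le hd
  set w := fun k => φ' (g k)
  have hw : Antitone w := fun i j hij => hφ.monotoneOn_Ioi_of_hasDerivAt hφ' (hg_pos j) (hg_pos i)
    (mul_le_mul_of_nonneg_left (pow_le_pow_of_le_one ht0.le ht1.le hij) hq0.le)
  -- past the sign change, `|q k - g k| ≤ g k`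
  have hwd : Summable fun k => w k * (q k - g k) := by
    refine Summable.of_norm_bounded_eventually hφ'g.norm ?_
    rw [Nat.cofinite_eq_atTop, eventually_atTop]
    refine ⟨K, fun k hk => ?_⟩
    rw [norm_mul, norm_mul, Real.norm_of_nonpos (sub_nonpos.mpr (hK_ge k hk)),
      Real.norm_of_nonneg (hg_pos k).le]
    exact mul_le_mul_of_nonneg_left (by linarith [hq.nonneg k]) (norm_nonneg _)
  have htangent : ∀ k, φ (g k) + w k * (q k - g k) ≤ φ (q k) := fun k =>
    hφ.add_mul_sub_le_of_hasDerivAt (hq.nonneg k) (hg_pos k).le (hφ' _ (hg_pos k))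
  have hlower := hφg.add hwd
  have hφq : Summable fun k => φ (q k) := by
    refine Summable.of_eventually_le_of_le hlower (hmass.summable.mul_left (φ 1))
      (.of_forall htangent) ?_
    filter_upwards [hmass.summable.tendsto_cofinite_zero.eventually (eventually_le_nhds one_pos)]
      with k hk
    exact hφ.le_mul_of_map_zero hφ0 (hq.nonneg k) hk
  refine ⟨hφq, ?_⟩
  calc ∑' k, φ (g k) ≤ ∑' k, φ (g k) + ∑' k, w k * (q k - g k) :=
        le_add_of_nonneg_right (tsum_mul_nonneg_of_antitone hw hd
          (fun k hk => sub_nonneg.mpr (hK_le k hk)) (fun k hk => sub_nonpos.mpr (hK_ge k hk)) hwd)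
    _ = ∑' k, (φ (g k) + w k * (q k - g k)) := (hφg.tsum_add hwd).symm
    _ ≤ ∑' k, φ (q k) := hlower.tsum_le_tsum htangent hφq

end IsLogConcaveSeq

theorem pos_of_hasDerivAt_of_deriv2_pos {F F' F'' : ℝ → ℝ} {a b x : ℝ}
    (hF : ContinuousOn F (Icc a b)) (hF' : ∀ y ∈ Ioc a b, HasDerivAt F (F' y) y)
    (hF'' : ∀ y ∈ Ioc a b, HasDerivAt F' (F'' y) y) (hF''_pos : ∀ y ∈ Ioo a b, 0 < F'' y)
    (hFb : F b = 0) (hF'b : F' b = 0) (hx : x ∈ Ico a b) : 0 < F x := by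
  have hab : a < b := hx.1.trans_lt hx.2
  have hF'_neg : ∀ y ∈ Ioo a b, F' y < 0 := by
    have hmono : StrictMonoOn F' (Ioc a b) :=
      strictMonoOn_of_hasDerivWithinAt_pos (convex_Ioc a b)
        (fun y hy => (hF'' y hy).continuousAt.continuousWithinAt)
        (fun y hy => (hF'' y (interior_subset hy)).hasDerivWithinAt)
        (by simpa only [interior_Ioc] using hF''_pos)
    intro y hy
    simpa [hF'b] using hmono ⟨hy.1, hy.2.le⟩ ⟨hab, le_rfl⟩ hy.2
  have hanti : StrictAntiOn F (Icc a b) :=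
    strictAntiOn_of_hasDerivWithinAt_neg (convex_Icc a b) hF
      (fun y hy => (hF' y (Ioo_subset_Ioc_self (by simpa only [interior_Icc] using hy)))
        |>.hasDerivWithinAt)
      (by simpa only [interior_Icc] using hF'_neg)
  simpa [hFb] using hanti ⟨hx.1, hx.2.le⟩ ⟨hab.le, le_rfl⟩ hx.2

section GeometricGap

variable {α t M : ℝ}

theorem renyi_gap_pos (hα : 0 < α) (hα1 : α ≠ 1) (ht0 : 0 ≤ t) (ht1 : t < 1) :
    0 < (α - 1) * (2 * α * (1 - t) - 2 * (1 - t ^ α) - (α - 1) * (1 - t) * (1 - t ^ α)) := by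
  have hcont := Real.continuous_rpow_const hα.le
  refine pos_of_hasDerivAt_of_deriv2_pos (a := 0) (b := 1)
    (F := fun x => (α - 1) * (2 * α * (1 - x) - 2 * (1 - x ^ α) - (α - 1) * (1 - x) * (1 - x ^ α)))
    (F' := fun x => (α - 1) * (-2 * α + 2 * α * x ^ (α - 1)
      + (α - 1) * ((1 - x ^ α) + α * x ^ (α - 1) * (1 - x))))
    (F'' := fun x => (α - 1) ^ 2 * α * (α + 1) * x ^ (α - 2) * (1 - x))
    (by fun_prop) (fun x hx => ?_) (fun x hx => ?_) (fun x hx => ?_) (by simp) (by simp) ⟨ht0, ht1⟩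
  · have h := Real.hasDerivAt_rpow_const (p := α) (Or.inl hx.1.ne')
    have h1 := (hasDerivAt_id' x).const_sub 1
    exact ((((h1.const_mul (2 * α)).sub ((h.const_sub 1).const_mul 2)).sub
      ((h1.const_mul (α - 1)).mul (h.const_sub 1))).const_mul (α - 1)).congr_deriv (by ring)
  · have h := Real.hasDerivAt_rpow_const (p := α) (Or.inl hx.1.ne')
    have h' := Real.hasDerivAt_rpow_const (p := α - 1) (Or.inl hx.1.ne')
    have h1 := (hasDerivAt_id' x).const_sub 1
    have e : x ^ (α - 1) = x ^ (α - 2) * x := by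
      rw [← Real.rpow_add_one hx.1.ne']; ring_nf
    refine ((((h'.const_mul (2 * α)).const_add (-2 * α)).add
      (((h.const_sub 1).add ((h'.const_mul α).mul h1)).const_mul (α - 1))).const_mul (α - 1))
      |>.congr_deriv ?_
    rw [show α - 1 - 1 = α - 2 by ring, e]
    ring
  · have : 0 < 1 - x := sub_pos.mpr hx.2
    have : 0 < x ^ (α - 2) := Real.rpow_pos_of_pos hx.1 _
    have : (α - 1) ^ 2 ≠ 0 := pow_ne_zero 2 (sub_ne_zero.mpr hα1)
    positivity


theorem renyi_geometric_bound (hM : 0 < M) (hα : 0 < α) (hα1 : α ≠ 1) (ht0 : 0 ≤ t)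
    (ht1 : t < 1) :
    M ^ α / 2 + M ^ (α - 1) / (α - 1) * (M * (1 - t)⁻¹)
      < α / (α - 1) * (M ^ α * (1 - t ^ α)⁻¹) := by
  have hgap := renyi_gap_pos hα hα1 ht0 ht1
  have h1t : 0 < 1 - t := sub_pos.mpr ht1
  have h1tα : 0 < 1 - t ^ α := sub_pos.mpr (Real.rpow_lt_one ht0 ht1 hα)
  have hsub : α - 1 ≠ 0 := sub_ne_zero.mpr hα1
  have hMα : 0 < M ^ α := Real.rpow_pos_of_pos hM α
  have key : α / (α - 1) * (M ^ α * (1 - t ^ α)⁻¹)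
      - (M ^ α / 2 + M ^ (α - 1) / (α - 1) * (M * (1 - t)⁻¹))
      = M ^ α * ((α - 1) * (2 * α * (1 - t) - 2 * (1 - t ^ α) - (α - 1) * (1 - t) * (1 - t ^ α)))
        / (2 * (α - 1) ^ 2 * (1 - t) * (1 - t ^ α)) := by
    rw [Real.rpow_sub_one hM.ne']
    field_simp
    ring
  have : 0 < 2 * (α - 1) ^ 2 * (1 - t) * (1 - t ^ α) := by
    have : (α - 1) ^ 2 ≠ 0 := pow_ne_zero 2 hsub
    positivity
  linarith [div_pos (mul_pos hMα hgap) this]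

theorem shannon_gap_pos (ht0 : 0 ≤ t) (ht1 : t < 1) : 0 < t * log t + (1 - t ^ 2) / 2 := by
  refine pos_of_hasDerivAt_of_deriv2_pos (a := 0) (b := 1)
    (F := fun x => x * log x + (1 - x ^ 2) / 2)
    (F' := fun x => log x + 1 - x) (F'' := fun x => x⁻¹ - 1)
    (by fun_prop) (fun x hx => ?_) (fun x hx => ?_) (fun x hx => ?_) (by simp) (by simp) ⟨ht0, ht1⟩
  · exact ((Real.hasDerivAt_mul_log hx.1.ne').add (((hasDerivAt_pow 2 x).const_sub 1).div_const 2))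
      |>.congr_deriv (by ring)
  · exact (((Real.hasDerivAt_log hx.1.ne').add_const 1).sub (hasDerivAt_id' x))
  · simpa using (one_lt_inv₀ hx.1).mpr hx.2

theorem shannon_geometric_bound (hM : 0 < M) (ht0 : 0 ≤ t) (ht1 : t < 1) :
    M / 2 + (log M - 1) * (M * (1 - t)⁻¹)
      < M * log M * (1 - t)⁻¹ + M * log t * (t / (1 - t) ^ 2) := by
  have h1t : 0 < 1 - t := sub_pos.mpr ht1
  have key : M * log M * (1 - t)⁻¹ + M * log t * (t / (1 - t) ^ 2)
      - (M / 2 + (log M - 1) * (M * (1 - t)⁻¹))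
      = M / (1 - t) ^ 2 * (t * log t + (1 - t ^ 2) / 2) := by
    field_simp
    ring
  linarith [mul_pos (div_pos hM (pow_pos h1t 2)) (shannon_gap_pos ht0 ht1)]

end GeometricGap

theorem hasSum_rpow_geometric {α M t : ℝ} (hα : 0 < α) (hM : 0 ≤ M) (ht0 : 0 ≤ t) (ht1 : t < 1) :
    HasSum (fun k : ℕ => (M * t ^ k) ^ α) (M ^ α * (1 - t ^ α)⁻¹) := by
  have h := (hasSum_geometric_of_lt_one (Real.rpow_nonneg ht0 α) (Real.rpow_lt_one ht0 ht1 hα))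
    |>.mul_left (M ^ α)
  refine h.congr_fun fun k => ?_
  rw [Real.mul_rpow hM (pow_nonneg ht0 k), Real.rpow_pow_comm ht0]

theorem hasSum_mul_log_geometric {M t : ℝ} (hM : 0 < M) (ht0 : 0 ≤ t) (ht1 : t < 1) :
    HasSum (fun k : ℕ => M * t ^ k * log (M * t ^ k))
      (M * log M * (1 - t)⁻¹ + M * log t * (t / (1 - t) ^ 2)) := by
  have hnorm : ‖t‖ < 1 := by rwa [Real.norm_of_nonneg ht0]
  have h := ((hasSum_geometric_of_lt_one ht0 ht1).mul_left (M * log M)).add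
    ((hasSum_coe_mul_geometric_of_norm_lt_one hnorm).mul_left (M * log t))
  refine h.congr_fun fun k => ?_
  rcases ht0.eq_or_lt with rfl | ht
  · rcases k with _ | k <;> simp
  · rw [Real.log_mul hM.ne' (pow_pos ht k).ne', Real.log_pow]
    ring

theorem convexOn_rpow_div_sub_one {α : ℝ} (hα : 0 < α) (hα1 : α ≠ 1) :
    ConvexOn ℝ (Ici 0) fun x : ℝ => x ^ α / (α - 1) := by
  rcases lt_or_gt_of_ne hα1 with h | h
  · refine ((concaveOn_rpow hα.le h.le).neg.smul (inv_nonneg.mpr (sub_nonneg.mpr h.le))).congr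
      fun x _ => ?_
    simp only [Pi.neg_apply, smul_eq_mul]
    rw [← neg_sub α 1, inv_neg, neg_mul_neg, inv_mul_eq_div]
  · exact ((convexOn_rpow h.le).smul (inv_nonneg.mpr (sub_nonneg.mpr h.le))).congr
      fun x _ => by simp only [smul_eq_mul, inv_mul_eq_div]

theorem exists_mass_eq_geometric {q : ℕ → ℝ} {a : ℝ} (hq : ∀ k, 0 ≤ q k) (hq0 : 0 < q 0)
    (hmass : HasSum q a) : ∃ t, 0 ≤ t ∧ t < 1 ∧ a = q 0 * (1 - t)⁻¹ := by
  have ha : q 0 ≤ a := le_hasSum hmass 0 fun k _ => hq k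
  have ha0 : 0 < a := hq0.trans_le ha
  refine ⟨1 - q 0 / a, sub_nonneg.mpr ((div_le_one ha0).mpr ha), sub_lt_self 1 (div_pos hq0 ha0),
    ?_⟩
  rw [sub_sub_cancel, inv_div, mul_div_cancel₀ _ hq0.ne']

namespace IsLogConcaveSeq

variable {q : ℕ → ℝ} {a α : ℝ}

theorem renyi_bound (hq : IsLogConcaveSeq q) (hmass : HasSum q a) (hq0 : 0 < q 0) (hα : 0 < α)
    (hα1 : α ≠ 1) :
    Summable (fun k => q k ^ α) ∧
      q 0 ^ α / 2 + q 0 ^ (α - 1) / (α - 1) * a < α / (α - 1) * ∑' k, q k ^ α := by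
  obtain ⟨t, ht0, ht1, rfl⟩ := exists_mass_eq_geometric hq.nonneg hq0 hmass
  have hgeom := hasSum_rpow_geometric hα hq0.le ht0 ht1
  have hderiv : ∀ k, α * (q 0 * t ^ k) ^ α / (α - 1)
      = α * (q 0 * t ^ k) ^ (α - 1) / (α - 1) * (q 0 * t ^ k) := fun k => by
    have e : (q 0 * t ^ k) ^ (α - 1) * (q 0 * t ^ k) = (q 0 * t ^ k) ^ α := by
      rw [← Real.rpow_add_one' (by positivity) (by simpa using hα.ne'), sub_add_cancel]
    linear_combination (α / (α - 1)) * e.symm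
  obtain ⟨hsum, hle⟩ := hq.tsum_comp_geometric_le hq0 ht0 ht1 hmass
    (φ' := fun x => α * x ^ (α - 1) / (α - 1)) (convexOn_rpow_div_sub_one hα hα1)
    (by simp [Real.zero_rpow hα.ne'])
    (fun x hx => (Real.hasDerivAt_rpow_const (Or.inl hx.ne')).div_const _)
    (hgeom.div_const _).summable (((hgeom.mul_left α).div_const (α - 1)).summable.congr hderiv)
  rw [tsum_div_const, tsum_div_const, hgeom.tsum_eq] at hle
  refine ⟨(summable_div_const_iff (sub_ne_zero.mpr hα1)).mp hsum, ?_⟩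
  calc _ < α / (α - 1) * (q 0 ^ α * (1 - t ^ α)⁻¹) := renyi_geometric_bound hq0 hα hα1 ht0 ht1
    _ = α * (q 0 ^ α * (1 - t ^ α)⁻¹ / (α - 1)) := by ring
    _ ≤ α * ((∑' k, q k ^ α) / (α - 1)) := mul_le_mul_of_nonneg_left hle hα.le
    _ = _ := by ring

theorem shannon_bound (hq : IsLogConcaveSeq q) (hmass : HasSum q a) (hq0 : 0 < q 0) :
    Summable (fun k => q k * log (q k)) ∧
      q 0 / 2 + (log (q 0) - 1) * a < ∑' k, q k * log (q k) := by
  obtain ⟨t, ht0, ht1, rfl⟩ := exists_mass_eq_geometric hq.nonneg hq0 hmass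
  have hgeom := hasSum_mul_log_geometric hq0 ht0 ht1
  obtain ⟨hsum, hle⟩ := hq.tsum_comp_geometric_le hq0 ht0 ht1 hmass Real.convexOn_mul_log (by simp)
    (fun x hx => Real.hasDerivAt_mul_log hx.ne') hgeom.summable
    ((hgeom.add ((hasSum_geometric_of_lt_one ht0 ht1).mul_left (q 0))).summable.congr
      fun k => by ring)
  exact ⟨hsum, (shannon_geometric_bound hq0 ht0 ht1).trans_le (hgeom.tsum_eq ▸ hle)⟩

end IsLogConcaveSeq

theorem hasSum_int_of_add_of_sub {G : Type*} [AddCommGroup G] [TopologicalSpace G]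
    [IsTopologicalAddGroup G] {f : ℤ → G} {m : ℤ} {a b : G}
    (ha : HasSum (fun k : ℕ => f (m + k)) a) (hb : HasSum (fun k : ℕ => f (m - k)) b) :
    HasSum f (a + b - f m) := by
  have h := HasSum.of_nat_of_neg (f := fun n => f (m + n)) ha (by simpa [← sub_eq_add_neg] using hb)
  rw [add_zero] at h
  exact (Equiv.addLeft m).hasSum_iff.mp h

namespace IsLogConcavePMF

variable {p : ℤ → ℝ} {m : ℤ} {α : ℝ}

theorem comp_neg (hp : IsLogConcavePMF p) : IsLogConcavePMF fun n => p (-n) := by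
  refine ⟨fun n => ?_, fun a b c hab hbc ha hc =>
    hp.2 (-c) (-b) (-a) (neg_le_neg hbc) (neg_le_neg hab) hc ha⟩
  have h := hp.1 (-n)
  rw [mul_comm] at h
  convert h using 3 <;> ring

theorem isLogConcaveSeq_add (hp : IsLogConcavePMF p) (hnn : ∀ n, 0 ≤ p n) (hm : 0 < p m) :
    IsLogConcaveSeq fun k : ℕ => p (m + k) where
  nonneg k := hnn _
  mul_le_sq k := by
    convert hp.1 (m + k + 1) using 3 <;> push_cast <;> ring
  succ_eq_zero k hk := by
    by_contra hne
    exact (hp.2 m (m + k) (m + (k + 1 : ℕ)) (by omega) (by omega) hm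
      ((hnn _).lt_of_ne' hne)).ne' hk

theorem isLogConcaveSeq_sub (hp : IsLogConcavePMF p) (hnn : ∀ n, 0 ≤ p n) (hm : 0 < p m) :
    IsLogConcaveSeq fun k : ℕ => p (m - k) := by
  convert hp.comp_neg.isLogConcaveSeq_add (m := -m) (fun n => hnn _) (by simpa using hm) using 3
  ring

theorem renyi_bound (hp : IsLogConcavePMF p) (hnn : ∀ n, 0 ≤ p n) (hmass : HasSum p 1)
    (hm : 0 < p m) (hα : 0 < α) (hα1 : α ≠ 1) :
    0 < ∑' n, p n ^ α ∧ p m ^ (α - 1) / (α - 1) < α / (α - 1) * ∑' n, p n ^ α := by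
  have hR : Summable fun k : ℕ => p (m + k) :=
    hmass.summable.comp_injective fun a b h => by simpa using h
  have hL : Summable fun k : ℕ => p (m - k) :=
    hmass.summable.comp_injective fun a b h => by simpa using h
  obtain ⟨hRα, hR'⟩ :=
    (hp.isLogConcaveSeq_add hnn hm).renyi_bound hR.hasSum (by simpa using hm) hα hα1
  obtain ⟨hLα, hL'⟩ :=
    (hp.isLogConcaveSeq_sub hnn hm).renyi_bound hL.hasSum (by simpa using hm) hα hα1
  have htotal := (hasSum_int_of_add_of_sub (f := p) hR.hasSum hL.hasSum).unique hmass
  have hS := hasSum_int_of_add_of_sub (f := fun n => p n ^ α) hRα.hasSum hLα.hasSum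
  have hMM : p m ^ (α - 1) * p m = p m ^ α := by
    rw [← Real.rpow_add_one' (hnn m) (by simpa using hα.ne'), sub_add_cancel]
  simp only [Nat.cast_zero, add_zero, sub_zero] at hR' hL'
  have hinv : (α - 1) * (α - 1)⁻¹ = 1 := mul_inv_cancel₀ (sub_ne_zero.mpr hα1)
  rw [hS.tsum_eq]
  refine ⟨(Real.rpow_pos_of_pos hm α).trans_le
    (le_hasSum hS m fun n _ => Real.rpow_nonneg (hnn n) α), ?_⟩
  linear_combination
    hR' + hL' - p m ^ (α - 1) / (α - 1) * htotal - 1 / (α - 1) * hMM + p m ^ α * hinv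

theorem shannon_bound (hp : IsLogConcavePMF p) (hnn : ∀ n, 0 ≤ p n) (hmass : HasSum p 1)
    (hm : 0 < p m) : log (p m) - 1 < ∑' n, p n * log (p n) := by
  have hR : Summable fun k : ℕ => p (m + k) :=
    hmass.summable.comp_injective fun a b h => by simpa using h
  have hL : Summable fun k : ℕ => p (m - k) :=
    hmass.summable.comp_injective fun a b h => by simpa using h
  obtain ⟨hRlog, hR'⟩ := (hp.isLogConcaveSeq_add hnn hm).shannon_bound hR.hasSum (by simpa using hm)
  obtain ⟨hLlog, hL'⟩ := (hp.isLogConcaveSeq_sub hnn hm).shannon_bound hL.hasSum (by simpa using hm)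
  have htotal := (hasSum_int_of_add_of_sub (f := p) hR.hasSum hL.hasSum).unique hmass
  have hS := hasSum_int_of_add_of_sub (f := fun n => p n * log (p n)) hRlog.hasSum hLlog.hasSum
  simp only [Nat.cast_zero, add_zero, sub_zero] at hR' hL'
  rw [hS.tsum_eq]
  linear_combination hR' + hL' - (log (p m) - 1) * htotal

end IsLogConcavePMF

theorem exists_forall_le_of_tendsto_zero {ι : Type*} {f : ι → ℝ} (hf : Tendsto f cofinite (𝓝 0))
    {i₀ : ι} (hi₀ : 0 < f i₀) : ∃ i, ∀ j, f j ≤ f i := by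
  have hfin : {j | f i₀ ≤ f j}.Finite := by
    simpa only [not_lt] using eventually_cofinite.mp (hf.eventually (gt_mem_nhds hi₀))
  obtain ⟨i, hi, hmax⟩ := Set.exists_max_image _ f hfin ⟨i₀, le_refl (f i₀)⟩
  exact ⟨i, fun j => (le_total (f i₀) (f j)).elim (hmax j) fun hj => hj.trans hi⟩

theorem inv_one_sub_mul_log_sub_neg_log_lt {α M S : ℝ} (hα : 0 < α) (hM : 0 < M) (hS : 0 < S)
    (h : M ^ (α - 1) / (α - 1) < α / (α - 1) * S) :
    (1 - α)⁻¹ * log S - -log M < log α / (α - 1) := by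
  have hsub : α - 1 ≠ 0 := fun h0 => by simp [h0] at h
  have e : (1 - α)⁻¹ * log S - -log M = ((α - 1) * log M - log S) / (α - 1) := by
    rw [← neg_sub α 1, inv_neg]
    field_simp
    ring
  rw [e, div_mul_eq_mul_div] at *
  rcases lt_or_gt_of_ne hsub with hneg | hpos
  · rw [div_lt_div_right_of_neg hneg] at h ⊢
    have := Real.log_lt_log (by positivity) h
    rw [Real.log_mul hα.ne' hS.ne', Real.log_rpow hM] at this
    linarith
  · rw [div_lt_div_iff_of_pos_right hpos] at h ⊢
    have := Real.log_lt_log (Real.rpow_pos_of_pos hM _) h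
    rw [Real.log_mul hα.ne' hS.ne', Real.log_rpow hM] at this
    linarith

/-- For a log-concave pmf on `ℤ` and `α ∈ (0,∞)`,
`H_α(p) − H_∞(p) < log(α^{1/(α−1)})`, the right side read as `1` when `α = 1`. -/
theorem renyi_minEntropy_comparison (p : ℤ → ℝ) (hpmf : IsPMF p)
    (hlc : IsLogConcavePMF p) (α : ℝ) (hα : 0 < α) :
    renyiEnt α p - minEnt p < if α = 1 then 1 else Real.log α / (α - 1) := by
  obtain ⟨hnn, hsum, htot⟩ := hpmf
  have hmass : HasSum p 1 := htot ▸ hsum.hasSum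
  obtain ⟨n₀, hn₀⟩ : ∃ n, 0 < p n := by
    by_contra! h
    simp [funext fun n => le_antisymm (h n) (hnn n)] at htot
  obtain ⟨m, hm⟩ := exists_forall_le_of_tendsto_zero hsum.tendsto_cofinite_zero hn₀
  have hm0 : 0 < p m := hn₀.trans_le (hm n₀)
  rw [renyiEnt, minEnt, ciSup_eq_of_forall_le_of_forall_lt_exists_gt hm fun w hw => ⟨m, hw⟩]
  split_ifs with h1
  · linarith [hlc.shannon_bound hnn hmass hm0]
  · obtain ⟨hS, hkey⟩ := hlc.renyi_bound hnn hmass hm0 hα h1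
    exact inv_one_sub_mul_log_sub_neg_log_lt hα hm0 hS hkey
end

section
/- Let α ∈ (0,∞) and for p ∈ (0,1) let Z_p be the geometric probability mass function on ℤ given by Z_p(n) = p(1−p)^n for n ≥ 0 and Z_p(n) = 0 for n < 0. Then lim_{p→0⁺} (H_α(Z_p) − H_∞(Z_p)) = log(α^{1/(α−1)}), where for α = 1 the right-hand side is interpreted as 1. -/
open Real Filter

/-- The geometric pmf on `ℤ` with parameter `p`:
`Z_p(n) = p(1−p)ⁿ` for `n ≥ 0` and `0` otherwise. -/
noncomputable def geomPMF (p : ℝ) : ℤ → ℝ :=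
  fun n => if 0 ≤ n then p * (1 - p) ^ n.toNat else 0

/-!
With `q = 1 - p`, both entropies of `Z_p` have closed forms:
`∑ Z_p(n)^α = p^α / (1 - q^α)`, `∑ Z_p(n) log Z_p(n) = log p + q log q / p`, and `sup Z_p = p`.
Hence the gap equals `log ((1 - q^α) / p) / (α - 1)` for `α ≠ 1` and `-q log q / p` for `α = 1`,
and both are difference quotients at `p = 0` of functions vanishing there, with derivatives
`α` and `1` respectively.
-/

open Topology

theorem tsum_int_eq_tsum_natCast_of_neg_eq_zero {M : Type*} [AddCommMonoid M] [TopologicalSpace M]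
    {f : ℤ → M} (hf : ∀ n < 0, f n = 0) : ∑' n : ℤ, f n = ∑' n : ℕ, f n :=
  (Nat.cast_injective.tsum_eq fun n hn ↦
    ⟨n.toNat, Int.toNat_of_nonneg (not_lt.mp (hn ∘ hf n))⟩).symm

theorem tendsto_div_nhdsGT_zero_of_hasDerivAt {f : ℝ → ℝ} {f' : ℝ} (hf : HasDerivAt f f' 0)
    (hf0 : f 0 = 0) : Tendsto (fun x ↦ f x / x) (𝓝[>] 0) (𝓝 f') := by
  simpa [hf0, div_eq_inv_mul] using hf.tendsto_slope_zero_right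

theorem tendsto_one_sub_one_sub_rpow_div (α : ℝ) :
    Tendsto (fun x : ℝ ↦ (1 - (1 - x) ^ α) / x) (𝓝[>] 0) (𝓝 α) := by
  refine tendsto_div_nhdsGT_zero_of_hasDerivAt ?_ (by simp)
  simpa using (((hasDerivAt_id (0 : ℝ)).const_sub 1).rpow_const (p := α) (by simp)).const_sub 1

theorem tendsto_neg_one_sub_mul_log_one_sub_div :
    Tendsto (fun x : ℝ ↦ -((1 - x) * log (1 - x)) / x) (𝓝[>] 0) (𝓝 1) := by
  refine tendsto_div_nhdsGT_zero_of_hasDerivAt ?_ (by simp)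
  have hsub := (hasDerivAt_id (0 : ℝ)).const_sub 1
  simpa using (hsub.fun_mul (hsub.log (by simp))).fun_neg

section geomPMF

variable {p : ℝ}

theorem geomPMF_of_neg {n : ℤ} (hn : n < 0) : geomPMF p n = 0 :=
  if_neg hn.not_ge

theorem geomPMF_natCast (n : ℕ) : geomPMF p n = p * (1 - p) ^ n := by
  simp [geomPMF]

theorem geomPMF_le (h0 : 0 ≤ p) (h1 : p ≤ 1) (n : ℤ) : geomPMF p n ≤ p := by
  unfold geomPMF
  split
  · exact mul_le_of_le_one_right h0 (pow_le_one₀ (by linarith) (by linarith))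
  · exact h0

theorem iSup_geomPMF (h0 : 0 ≤ p) (h1 : p ≤ 1) : ⨆ n, geomPMF p n = p :=
  le_antisymm (ciSup_le (geomPMF_le h0 h1)) <|
    le_ciSup_of_le ⟨p, Set.forall_mem_range.2 (geomPMF_le h0 h1)⟩ 0 (by simp [geomPMF])

theorem tsum_geomPMF_rpow {α : ℝ} (hα : 0 < α) (h0 : 0 < p) (h1 : p ≤ 1) :
    ∑' n, geomPMF p n ^ α = p ^ α / (1 - (1 - p) ^ α) := by
  have hq : 0 ≤ 1 - p := by linarith
  have hterm (n : ℕ) : geomPMF p n ^ α = p ^ α * ((1 - p) ^ α) ^ n := by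
    rw [geomPMF_natCast, mul_rpow h0.le (pow_nonneg hq n), ← rpow_natCast, ← rpow_natCast,
      ← rpow_mul hq, ← rpow_mul hq, mul_comm α]
  rw [tsum_int_eq_tsum_natCast_of_neg_eq_zero fun n hn ↦ by
      rw [geomPMF_of_neg hn, zero_rpow hα.ne'],
    tsum_congr hterm, tsum_mul_left,
    tsum_geometric_of_lt_one (rpow_nonneg hq α) (rpow_lt_one hq (by linarith) hα), div_eq_mul_inv]

theorem tsum_geomPMF_mul_log (h0 : 0 < p) (h1 : p < 1) :
    ∑' n, geomPMF p n * log (geomPMF p n) = log p + (1 - p) * log (1 - p) / p := by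
  have hq : 0 < 1 - p := by linarith
  have hq1 : ‖1 - p‖ < 1 := by rw [norm_of_nonneg hq.le]; linarith
  have hterm (n : ℕ) : geomPMF p n * log (geomPMF p n)
      = p * log p * (1 - p) ^ n + p * log (1 - p) * (n * (1 - p) ^ n) := by
    rw [geomPMF_natCast, log_mul h0.ne' (pow_ne_zero n hq.ne'), log_pow]
    ring
  have hsum := ((hasSum_geometric_of_norm_lt_one hq1).mul_left (p * log p)).add
    ((hasSum_coe_mul_geometric_of_norm_lt_one hq1).mul_left (p * log (1 - p)))
  rw [tsum_int_eq_tsum_natCast_of_neg_eq_zero fun n hn ↦ by simp [geomPMF_of_neg hn],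
    tsum_congr hterm, hsum.tsum_eq, sub_sub_cancel]
  field_simp

theorem renyiEnt_geomPMF_sub_minEnt {α : ℝ} (hα : 0 < α) (hα1 : α ≠ 1) (h0 : 0 < p)
    (h1 : p < 1) :
    renyiEnt α (geomPMF p) - minEnt (geomPMF p) = log ((1 - (1 - p) ^ α) / p) / (α - 1) := by
  have hA : 0 < 1 - (1 - p) ^ α := sub_pos.2 (rpow_lt_one (by linarith) (by linarith) hα)
  have hα1' : α - 1 ≠ 0 := sub_ne_zero.2 hα1
  rw [renyiEnt, if_neg hα1, minEnt, iSup_geomPMF h0.le h1.le, tsum_geomPMF_rpow hα h0 h1.le,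
    log_div (rpow_pos_of_pos h0 α).ne' hA.ne', log_div hA.ne' h0.ne', log_rpow h0,
    ← neg_sub α 1, inv_neg]
  field_simp
  ring

theorem renyiEnt_one_geomPMF_sub_minEnt (h0 : 0 < p) (h1 : p < 1) :
    renyiEnt 1 (geomPMF p) - minEnt (geomPMF p) = -((1 - p) * log (1 - p)) / p := by
  rw [renyiEnt, if_pos rfl, minEnt, iSup_geomPMF h0.le h1.le, tsum_geomPMF_mul_log h0 h1]
  ring

end geomPMF

/-- For `α ∈ (0,∞)`, `lim_{p→0⁺} (H_α(Z_p) − H_∞(Z_p)) = log(α^{1/(α−1)})`,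
the right side read as `1` when `α = 1`. -/
theorem geometric_limit_renyi_minEntropy_gap (α : ℝ) (hα : 0 < α) :
    Tendsto (fun p : ℝ => renyiEnt α (geomPMF p) - minEnt (geomPMF p))
      (nhdsWithin 0 (Set.Ioi 0))
      (nhds (if α = 1 then 1 else Real.log α / (α - 1))) := by
  have hp : ∀ᶠ p in 𝓝[>] (0 : ℝ), p ∈ Set.Ioo 0 1 := Ioo_mem_nhdsGT one_pos
  split_ifs with hα1
  · subst hα1
    refine tendsto_neg_one_sub_mul_log_one_sub_div.congr' ?_
    filter_upwards [hp] with p ⟨h0, h1⟩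
    exact (renyiEnt_one_geomPMF_sub_minEnt h0 h1).symm
  · refine (((tendsto_one_sub_one_sub_rpow_div α).log hα.ne').div_const (α - 1)).congr' ?_
    filter_upwards [hp] with p ⟨h0, h1⟩
    exact (renyiEnt_geomPMF_sub_minEnt hα hα1 h0 h1).symm
end

section
/- Let φ be a two-sided geometric probability mass function on ℤ with parameters p, q ∈ [0,1) and mode m ∈ ℤ. Then for every α ∈ (0,∞), H_α(φ) − H_∞(φ) < (log α)/(α−1), where at α = 1 the right-hand side is interpreted as 1 (= log e). -/
/-!
With `C = (1-p)(1-q)/(1-pq)` the largest value of `φ` is `C`, `1/C = 1/(1-p) + 1/(1-q) - 1`, and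
every power sum is a pair of geometric series: `∑ φ^α = C^α (1/(1-p^α) + 1/(1-q^α) - 1)`.
For `α ≠ 1` the inequality thus splits into `(α - 1) (f(α) - f(1)) > 0` for `x = p` and `x = q`,
where `f(α) = α/(1-x^α) - α/2`, and for `α = 1` into `f'(1) > 0`. Both hold because
`f'(α) = Q(x^α)/(1-x^α)^2` with `Q(y) = 1 - y + y log y - (1-y)^2/2`, which is positive on `[0,1)`:
`Q(1) = 0` and `Q'(y) = log y + 1 - y < 0`.
-/

open Real

/-- The two-sided geometric pmf with parameters `p, q ∈ [0,1)` and mode `m`: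
`φ(n) = C·p^{n−m}` for `n ≥ m`, `φ(n) = C·q^{m−n}` for `n ≤ m`,
with `C = (1−p)(1−q)/(1−pq)` and `0⁰ = 1`. -/
noncomputable def twoSidedGeom (p q : ℝ) (m : ℤ) : ℤ → ℝ :=
  fun n =>
    (1 - p) * (1 - q) / (1 - p * q) *
      (if m ≤ n then p ^ (n - m).toNat else q ^ (m - n).toNat)

open Set

lemma one_sub_sq_div_two_lt_one_sub_add_mul_log {y : ℝ} (hy0 : 0 ≤ y) (hy1 : y < 1) :
    (1 - y) ^ 2 / 2 < 1 - y + y * log y := by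
  let Q : ℝ → ℝ := fun t ↦ 1 - t + t * log t - (1 - t) ^ 2 / 2
  have hQ : StrictAntiOn Q (Icc y 1) := by
    refine strictAntiOn_of_hasDerivWithinAt_neg (convex_Icc y 1) (f' := fun t ↦ log t + 1 - t)
      (by fun_prop (disch := exact continuous_mul_log)) (fun t ht ↦ ?_) (fun t ht ↦ ?_) <;>
      rw [interior_Icc] at ht
    · have hsub := (hasDerivAt_id' t).const_sub 1
      have hderiv := (hsub.add (hasDerivAt_mul_log (hy0.trans_lt ht.1).ne')).sub
        ((hsub.pow 2).div_const 2)
      exact (hderiv.congr_deriv (by ring)).hasDerivWithinAt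
    · linarith [log_lt_sub_one_of_pos (hy0.trans_lt ht.1) ht.2.ne]
  have hQy := hQ ⟨le_rfl, hy1.le⟩ ⟨hy1.le, le_rfl⟩ hy1
  simp only [Q, sub_self, log_one, mul_zero] at hQy
  linarith

lemma half_lt_inv_one_sub_add_mul_log_div_sq {y : ℝ} (hy0 : 0 ≤ y) (hy1 : y < 1) :
    1 / 2 < (1 - y)⁻¹ + y * log y / (1 - y) ^ 2 := by
  have hy : 0 < 1 - y := by linarith
  have key : (1 - y)⁻¹ + y * log y / (1 - y) ^ 2 - 1 / 2
      = (1 - y + y * log y - (1 - y) ^ 2 / 2) / (1 - y) ^ 2 := by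
    field_simp
  have hQ := one_sub_sq_div_two_lt_one_sub_add_mul_log hy0 hy1
  rw [← sub_pos, key]
  exact div_pos (by linarith) (by positivity)

lemma strictMonoOn_mul_inv_one_sub_rpow_sub_half {x : ℝ} (hx0 : 0 < x) (hx1 : x < 1) :
    StrictMonoOn (fun α : ℝ ↦ α * (1 - x ^ α)⁻¹ - α / 2) (Ioi 0) := by
  have hderiv : ∀ α : ℝ, 0 < α → HasDerivAt (fun α : ℝ ↦ α * (1 - x ^ α)⁻¹ - α / 2)
      ((1 - x ^ α)⁻¹ + x ^ α * log (x ^ α) / (1 - x ^ α) ^ 2 - 1 / 2) α := by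
    intro α hα
    have hxα : 1 - x ^ α ≠ 0 := (sub_pos.2 (rpow_lt_one hx0.le hx1 hα)).ne'
    have hpow := (hasStrictDerivAt_const_rpow hx0 α).hasDerivAt
    have h := ((hasDerivAt_id' α).mul ((hpow.const_sub 1).inv hxα)).sub
      ((hasDerivAt_id' α).div_const 2)
    refine h.congr_deriv ?_
    rw [log_rpow hx0, Pi.inv_apply]; field_simp
  refine strictMonoOn_of_deriv_pos (convex_Ioi 0)
    (fun α hα ↦ (hderiv α hα).continuousAt.continuousWithinAt) fun α hα ↦ ?_
  rw [interior_Ioi] at hα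
  rw [(hderiv α hα).deriv, sub_pos]
  exact half_lt_inv_one_sub_add_mul_log_div_sq (rpow_nonneg hx0.le α) (rpow_lt_one hx0.le hx1 hα)

lemma sub_one_mul_mul_inv_one_sub_rpow_sub_pos {x α : ℝ} (hx0 : 0 ≤ x) (hx1 : x < 1)
    (hα : 0 < α) (hα1 : α ≠ 1) :
    0 < (α - 1) * (α * (1 - x ^ α)⁻¹ - (1 - x)⁻¹ - (α - 1) / 2) := by
  rcases hx0.eq_or_lt with rfl | hx0
  · rw [zero_rpow hα.ne']
    nlinarith [sq_pos_of_ne_zero (sub_ne_zero.2 hα1)]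
  · have hmono := strictMonoOn_mul_inv_one_sub_rpow_sub_half hx0 hx1
    have key : α * (1 - x ^ α)⁻¹ - (1 - x)⁻¹ - (α - 1) / 2
        = (α * (1 - x ^ α)⁻¹ - α / 2) - (1 * (1 - x ^ (1 : ℝ))⁻¹ - 1 / 2) := by
      rw [rpow_one]; ring
    rw [key]
    rcases lt_or_gt_of_ne hα1 with h | h
    · exact mul_pos_of_neg_of_neg (by linarith) (sub_neg.2 (hmono hα (mem_Ioi.2 one_pos) h))
    · exact mul_pos (by linarith) (sub_pos.2 (hmono (mem_Ioi.2 one_pos) hα h))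

lemma log_div_pos_of_mul_sub_one_pos {a X : ℝ} (hX : 0 < X) (h : 0 < a * (X - 1)) :
    0 < log X / a := by
  rcases pos_and_pos_or_neg_and_neg_of_mul_pos h with ⟨ha, h1⟩ | ⟨ha, h1⟩
  · exact div_pos (log_pos (by linarith)) ha
  · exact div_pos_of_neg_of_neg (log_neg hX (by linarith)) ha

lemma hasSum_rpow_mul_pow {c x α : ℝ} (hc : 0 ≤ c) (hx0 : 0 ≤ x) (hx1 : x < 1) (hα : 0 < α) :
    HasSum (fun k : ℕ ↦ (c * x ^ k) ^ α) (c ^ α * (1 - x ^ α)⁻¹) :=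
  ((hasSum_geometric_of_lt_one (rpow_nonneg hx0 α) (rpow_lt_one hx0 hx1 hα)).mul_left
    (c ^ α)).congr_fun fun k ↦ by rw [mul_rpow hc (pow_nonneg hx0 k), rpow_pow_comm hx0]

lemma hasSum_negMulLog_mul_pow {c x : ℝ} (hx0 : 0 ≤ x) (hx1 : x < 1) :
    HasSum (fun k : ℕ ↦ negMulLog (c * x ^ k))
      (negMulLog c * (1 - x)⁻¹ - c * (x * log x / (1 - x) ^ 2)) := by
  have hx : ‖x‖ < 1 := by rwa [norm_of_nonneg hx0]
  rw [show c * (x * log x / (1 - x) ^ 2) = c * log x * (x / (1 - x) ^ 2) by ring]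
  refine (((hasSum_geometric_of_lt_one hx0 hx1).mul_left (negMulLog c)).sub
    ((hasSum_coe_mul_geometric_of_norm_lt_one hx).mul_left (c * log x))).congr_fun fun k ↦ ?_
  rw [negMulLog_mul]
  unfold negMulLog
  rw [log_pow]
  ring

noncomputable def twoSidedGeomConst (p q : ℝ) : ℝ := (1 - p) * (1 - q) / (1 - p * q)

lemma twoSidedGeomConst_pos {p q : ℝ} (hp : p ∈ Ico 0 1) (hq : q ∈ Ico 0 1) :
    0 < twoSidedGeomConst p q := by
  have := mul_lt_one_of_nonneg_of_lt_one_left hp.1 hp.2 hq.2.le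
  exact div_pos (mul_pos (sub_pos.2 hp.2) (sub_pos.2 hq.2)) (sub_pos.2 this)

lemma twoSidedGeomConst_mul_eq_one {p q : ℝ} (hp : p ∈ Ico 0 1) (hq : q ∈ Ico 0 1) :
    twoSidedGeomConst p q * ((1 - p)⁻¹ + (1 - q)⁻¹ - 1) = 1 := by
  have hp' : 1 - p ≠ 0 := sub_ne_zero.2 hp.2.ne'
  have hq' : 1 - q ≠ 0 := sub_ne_zero.2 hq.2.ne'
  have hpq : 1 - p * q ≠ 0 :=
    (sub_pos.2 (mul_lt_one_of_nonneg_of_lt_one_left hp.1 hp.2 hq.2.le)).ne'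
  rw [twoSidedGeomConst]
  field_simp
  ring

lemma twoSidedGeom_apply (p q : ℝ) (m n : ℤ) :
    twoSidedGeom p q m n = if m ≤ n then twoSidedGeomConst p q * p ^ (n - m).toNat
      else twoSidedGeomConst p q * q ^ (m - n).toNat :=
  mul_ite _ _ _ _

lemma hasSum_comp_twoSidedGeom (F : ℝ → ℝ) {p q a b : ℝ} (m : ℤ)
    (hp : HasSum (fun k : ℕ ↦ F (twoSidedGeomConst p q * p ^ k)) a)
    (hq : HasSum (fun k : ℕ ↦ F (twoSidedGeomConst p q * q ^ k)) b) :
    HasSum (fun n ↦ F (twoSidedGeom p q m n)) (a + (b - F (twoSidedGeomConst p q))) := by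
  rw [← (Equiv.addRight m).hasSum_iff]
  have hq' := (hasSum_nat_add_iff' 1).2 hq
  rw [Finset.sum_range_one, pow_zero, mul_one] at hq'
  refine HasSum.of_nat_of_neg_add_one ?_ ?_
  · refine hp.congr_fun fun k ↦ ?_
    simp [twoSidedGeom_apply]
  · refine hq'.congr_fun fun k ↦ ?_
    simp only [Function.comp_apply, Equiv.coe_addRight, twoSidedGeom_apply,
      if_neg (by omega : ¬m ≤ -(k + 1 : ℤ) + m)]
    congr
    omega

lemma twoSidedGeom_le {p q : ℝ} (hp : p ∈ Ico 0 1) (hq : q ∈ Ico 0 1) (m n : ℤ) :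
    twoSidedGeom p q m n ≤ twoSidedGeomConst p q := by
  have hC := twoSidedGeomConst_pos hp hq
  rw [twoSidedGeom_apply]
  split_ifs
  · exact mul_le_of_le_one_right hC.le (pow_le_one₀ hp.1 hp.2.le)
  · exact mul_le_of_le_one_right hC.le (pow_le_one₀ hq.1 hq.2.le)

lemma minEnt_twoSidedGeom {p q : ℝ} (hp : p ∈ Ico 0 1) (hq : q ∈ Ico 0 1) (m : ℤ) :
    minEnt (twoSidedGeom p q m) = -log (twoSidedGeomConst p q) := by
  rw [minEnt, ciSup_eq_of_forall_le_of_forall_lt_exists_gt (twoSidedGeom_le hp hq m)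
    fun w hw ↦ ⟨m, by simpa [twoSidedGeom_apply] using hw⟩]

lemma hasSum_rpow_twoSidedGeom {p q α : ℝ} (hp : p ∈ Ico 0 1) (hq : q ∈ Ico 0 1) (m : ℤ)
    (hα : 0 < α) :
    HasSum (fun n ↦ twoSidedGeom p q m n ^ α)
      (twoSidedGeomConst p q ^ α * ((1 - p ^ α)⁻¹ + (1 - q ^ α)⁻¹ - 1)) := by
  have hC := (twoSidedGeomConst_pos hp hq).le
  convert hasSum_comp_twoSidedGeom (· ^ α) m (hasSum_rpow_mul_pow hC hp.1 hp.2 hα)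
    (hasSum_rpow_mul_pow hC hq.1 hq.2 hα) using 1
  ring

lemma hasSum_negMulLog_twoSidedGeom {p q : ℝ} (hp : p ∈ Ico 0 1) (hq : q ∈ Ico 0 1) (m : ℤ) :
    HasSum (fun n ↦ negMulLog (twoSidedGeom p q m n))
      (-log (twoSidedGeomConst p q) - twoSidedGeomConst p q *
        (p * log p / (1 - p) ^ 2 + q * log q / (1 - q) ^ 2)) := by
  convert hasSum_comp_twoSidedGeom negMulLog m (hasSum_negMulLog_mul_pow hp.1 hp.2)
    (hasSum_negMulLog_mul_pow hq.1 hq.2) using 1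
  unfold negMulLog
  linear_combination log (twoSidedGeomConst p q) * twoSidedGeomConst_mul_eq_one hp hq

lemma renyiEnt_one_sub_minEnt_twoSidedGeom_lt {p q : ℝ} (hp : p ∈ Ico 0 1) (hq : q ∈ Ico 0 1)
    (m : ℤ) : renyiEnt 1 (twoSidedGeom p q m) - minEnt (twoSidedGeom p q m) < 1 := by
  set C := twoSidedGeomConst p q
  have hC : 0 < C := twoSidedGeomConst_pos hp hq
  have hnorm : C * ((1 - p)⁻¹ + (1 - q)⁻¹ - 1) = 1 := twoSidedGeomConst_mul_eq_one hp hq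
  have hsides : 0 < C * (((1 - p)⁻¹ + p * log p / (1 - p) ^ 2 - 1 / 2) +
      ((1 - q)⁻¹ + q * log q / (1 - q) ^ 2 - 1 / 2)) := by
    have := half_lt_inv_one_sub_add_mul_log_div_sq hp.1 hp.2
    have := half_lt_inv_one_sub_add_mul_log_div_sq hq.1 hq.2
    exact mul_pos hC (by linarith)
  have hH : renyiEnt 1 (twoSidedGeom p q m) =
      -log C - C * (p * log p / (1 - p) ^ 2 + q * log q / (1 - q) ^ 2) := by
    rw [renyiEnt, if_pos rfl, ← tsum_neg, ← (hasSum_negMulLog_twoSidedGeom hp hq m).tsum_eq]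
    simp only [negMulLog, neg_mul]
  rw [hH, minEnt_twoSidedGeom hp hq]
  linarith

lemma renyiEnt_sub_minEnt_twoSidedGeom_lt {p q α : ℝ} (hp : p ∈ Ico 0 1) (hq : q ∈ Ico 0 1)
    (m : ℤ) (hα : 0 < α) (hα1 : α ≠ 1) :
    renyiEnt α (twoSidedGeom p q m) - minEnt (twoSidedGeom p q m) < log α / (α - 1) := by
  set C := twoSidedGeomConst p q
  set S := (1 - p ^ α)⁻¹ + (1 - q ^ α)⁻¹ - 1
  have hC : 0 < C := twoSidedGeomConst_pos hp hq
  have hS : 0 < S := by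
    have hp' : 1 ≤ (1 - p ^ α)⁻¹ :=
      one_le_inv₀ (by linarith [rpow_lt_one hp.1 hp.2 hα]) |>.2 (by linarith [rpow_nonneg hp.1 α])
    have hq' : 0 < (1 - q ^ α)⁻¹ := inv_pos.2 (by linarith [rpow_lt_one hq.1 hq.2 hα])
    linarith
  have hnorm : C * ((1 - p)⁻¹ + (1 - q)⁻¹ - 1) = 1 := twoSidedGeomConst_mul_eq_one hp hq
  have hgap : 0 < (α - 1) * (α * C * S - 1) := by
    have hsides := add_pos (sub_one_mul_mul_inv_one_sub_rpow_sub_pos hp.1 hp.2 hα hα1)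
      (sub_one_mul_mul_inv_one_sub_rpow_sub_pos hq.1 hq.2 hα hα1)
    have key : α * C * S - 1 = C * ((α * (1 - p ^ α)⁻¹ - (1 - p)⁻¹ - (α - 1) / 2) +
        (α * (1 - q ^ α)⁻¹ - (1 - q)⁻¹ - (α - 1) / 2)) := by
      linear_combination hnorm
    rw [key, mul_left_comm, mul_add]
    exact mul_pos hC hsides
  have hH : renyiEnt α (twoSidedGeom p q m) - minEnt (twoSidedGeom p q m) =
      -(log C + log S) / (α - 1) := by
    rw [renyiEnt, if_neg hα1, (hasSum_rpow_twoSidedGeom hp hq m hα).tsum_eq,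
      minEnt_twoSidedGeom hp hq, log_mul (rpow_pos_of_pos hC α).ne' hS.ne', log_rpow hC]
    field_simp
    ring
  rw [hH, ← sub_pos, div_sub_div_same, sub_neg_eq_add, ← add_assoc,
    ← log_mul hα.ne' hC.ne', ← log_mul (mul_pos hα hC).ne' hS.ne']
  exact log_div_pos_of_mul_sub_one_pos (mul_pos (mul_pos hα hC) hS) hgap

/-- For a two-sided geometric pmf `φ` and `α ∈ (0,∞)`,
`H_α(φ) − H_∞(φ) < (log α)/(α−1)`, the right side read as `1` when `α = 1`. -/
theorem twoSidedGeom_renyi_minEntropy_gap (p q : ℝ)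
    (hp : p ∈ Set.Ico (0 : ℝ) 1) (hq : q ∈ Set.Ico (0 : ℝ) 1) (m : ℤ)
    (α : ℝ) (hα : 0 < α) :
    renyiEnt α (twoSidedGeom p q m) - minEnt (twoSidedGeom p q m) <
      if α = 1 then 1 else Real.log α / (α - 1) := by
  split_ifs with hα1
  · subst hα1
    exact renyiEnt_one_sub_minEnt_twoSidedGeom_lt hp hq m
  · exact renyiEnt_sub_minEnt_twoSidedGeom_lt hp hq m hα hα1
end

section
/- For all x, y ∈ (0,1): x·log x/(1−x)² + y·log y/(1−y)² + 1/(1−x) + 1/(1−y) > 1. -/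
open Real

lemma log_lower_bound (x : ℝ) (hx0 : 0 < x) (hx1 : x < 1) :
    x ^ 2 - 1 < 2 * (x * Real.log x) := by
  set g : ℝ → ℝ := fun t => t ^ 2 - 1 - 2 * (t * Real.log t) with hg
  have hmono : StrictMonoOn g (Set.Icc x 1) := by
    apply strictMonoOn_of_deriv_pos (convex_Icc x 1)
    · apply ContinuousOn.sub
      · exact (continuousOn_pow 2).sub continuousOn_const
      · apply continuousOn_const.mul
        apply ContinuousOn.mul continuousOn_id
        exact Real.continuousOn_log.mono (by
          intro t ht
          simp only [Set.mem_compl_iff, Set.mem_singleton_iff]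
          have := ht.1
          intro h; rw [h] at this; linarith)
    · intro t ht
      rw [interior_Icc] at ht
      have htpos : 0 < t := lt_trans hx0 ht.1
      have hd : HasDerivAt g (2 * t ^ 1 - 2 * (Real.log t + 1)) t :=
        ((hasDerivAt_pow 2 t).sub_const 1).sub
          ((Real.hasDerivAt_mul_log htpos.ne').const_mul 2)
      rw [hd.deriv]
      have hlog : Real.log t < t - 1 := Real.log_lt_sub_one_of_pos htpos (ne_of_lt ht.2)
      have : t ^ 1 = t := pow_one t
      linarith
  have h := hmono (Set.left_mem_Icc.mpr hx1.le) (Set.right_mem_Icc.mpr hx1.le) hx1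
  simp only [hg, Real.log_one, mul_zero, one_pow] at h
  linarith

lemma single_var (x : ℝ) (hx : x ∈ Set.Ioo (0 : ℝ) 1) :
    1 / 2 < x * Real.log x / (1 - x) ^ 2 + 1 / (1 - x) := by
  have hx0 := hx.1
  have hx1 := hx.2
  have hu : (0 : ℝ) < 1 - x := by linarith
  have h1 := log_lower_bound x hx0 hx1
  have heq : x * Real.log x / (1 - x) ^ 2 + 1 / (1 - x) - 1 / 2
      = (2 * (x * Real.log x) - (x ^ 2 - 1)) / (2 * (1 - x) ^ 2) := by
    field_simp
    ring
  have hpos : 0 < (2 * (x * Real.log x) - (x ^ 2 - 1)) / (2 * (1 - x) ^ 2) := by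
    apply div_pos (by linarith) (by positivity)
  linarith [heq ▸ hpos]

/-- For `x, y ∈ (0,1)`:
`x log x/(1−x)² + y log y/(1−y)² + 1/(1−x) + 1/(1−y) > 1`. -/
theorem key_two_variable_inequality (x y : ℝ)
    (hx : x ∈ Set.Ioo (0 : ℝ) 1) (hy : y ∈ Set.Ioo (0 : ℝ) 1) :
    1 < x * Real.log x / (1 - x) ^ 2 + y * Real.log y / (1 - y) ^ 2 +
        1 / (1 - x) + 1 / (1 - y) := by
  have h1 := single_var x hx
  have h2 := single_var y hy
  linarith
end

section
/- The function f(x) = x·log x/(1−x)² + 1/(1−x) is strictly decreasing on (0,1), satisfies lim_{x→1⁻} f(x) = 1/2, and hence f(x) > 1/2 for every x ∈ (0,1). -/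
open Real Filter Set Topology InformationTheory

/-! The function equals `klFun x / (1 - x) ^ 2`, where `klFun x = x log x + 1 - x`. Its derivative
has the sign of `(1 + x) log x + 2 (1 - x)`, which is negative on `(0, 1)` by the classical bound
`log x < 2 (x - 1) / (x + 1)`; the limit at `1⁻` is a `0/0` form settled by l'Hôpital's rule, and
the lower bound `1/2` follows from monotonicity and the limit. -/

theorem StrictAntiOn.lt_of_tendsto_nhdsLT {α β : Type*} [LinearOrder α] [TopologicalSpace α]
    [OrderTopology α] [DenselyOrdered α] [LinearOrder β] [TopologicalSpace β]
    [OrderClosedTopology β] {f : α → β} {a b : α} {l : β} (hf : StrictAntiOn f (Ioo a b))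
    (hl : Tendsto f (𝓝[<] b) (𝓝 l)) {x : α} (hx : x ∈ Ioo a b) : l < f x := by
  obtain ⟨y, hxy, hyb⟩ := exists_between hx.2
  have hy : y ∈ Ioo a b := ⟨hx.1.trans hxy, hyb⟩
  have : NeBot (𝓝[<] b) := nhdsLT_neBot_of_exists_lt ⟨x, hx.2⟩
  have hly : l ≤ f y := le_of_tendsto hl <| by
    filter_upwards [Ioo_mem_nhdsLT hyb] with z hz
    exact (hf hy ⟨hy.1.trans hz.1, hz.2⟩ hz.1).le
  exact hly.trans_lt (hf hx hy hxy)

theorem Real.log_lt_two_mul_sub_one_div_add_one {x : ℝ} (hx0 : 0 < x) (hx1 : x < 1) :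
    log x < 2 * (x - 1) / (x + 1) := by
  have h := lt_log_one_add_of_pos (sub_pos.2 ((one_lt_inv₀ hx0).2 hx1))
  have ht : x⁻¹ - 1 + 2 = (x + 1) / x := by field_simp; ring
  rw [add_sub_cancel, log_inv, ht] at h
  calc log x < -(2 * (x⁻¹ - 1) / ((x + 1) / x)) := by linarith
    _ = 2 * (x - 1) / (x + 1) := by field_simp; ring

theorem Real.tendsto_log_div_sub_one_nhdsNE_one :
    Tendsto (fun x => log x / (x - 1)) (𝓝[≠] 1) (𝓝 1) := by
  have h := hasDerivAt_iff_tendsto_slope.1 (hasDerivAt_log one_ne_zero)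
  rw [inv_one] at h
  refine h.congr fun x => ?_
  simp [slope_def_field]

theorem hasDerivAt_one_sub_sq (x : ℝ) :
    HasDerivAt (fun y : ℝ => (1 - y) ^ 2) (-(2 * (1 - x))) x := by
  simpa using ((hasDerivAt_id x).const_sub 1).fun_pow 2

theorem mul_log_div_one_sub_sq_add_one_div_one_sub (x : ℝ) :
    x * log x / (1 - x) ^ 2 + 1 / (1 - x) = klFun x / (1 - x) ^ 2 := by
  rcases eq_or_ne x 1 with rfl | hx
  · simp
  · have : 1 - x ≠ 0 := sub_ne_zero.2 hx.symm
    rw [klFun_apply]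
    field_simp
    ring

theorem hasDerivAt_klFun_div_one_sub_sq {x : ℝ} (hx0 : x ≠ 0) (hx1 : x ≠ 1) :
    HasDerivAt (fun y => klFun y / (1 - y) ^ 2)
      (((1 + x) * log x + 2 * (1 - x)) / (1 - x) ^ 3) x := by
  have hsub : 1 - x ≠ 0 := sub_ne_zero.2 hx1.symm
  refine ((hasDerivAt_klFun hx0).div (hasDerivAt_one_sub_sq x) (pow_ne_zero 2 hsub)).congr_deriv ?_
  rw [klFun_apply]
  field_simp
  ring

theorem strictAntiOn_klFun_div_one_sub_sq :
    StrictAntiOn (fun x => klFun x / (1 - x) ^ 2) (Ioo 0 1) := by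
  have hderiv (x : ℝ) (hx : x ∈ Ioo (0 : ℝ) 1) :=
    hasDerivAt_klFun_div_one_sub_sq hx.1.ne' hx.2.ne
  refine strictAntiOn_of_hasDerivWithinAt_neg (convex_Ioo 0 1)
    (f' := fun x => ((1 + x) * log x + 2 * (1 - x)) / (1 - x) ^ 3)
    (fun x hx => (hderiv x hx).continuousAt.continuousWithinAt) ?_ ?_ <;> rw [interior_Ioo]
  · exact fun x hx => (hderiv x hx).hasDerivWithinAt
  · rintro x ⟨hx0, hx1⟩
    have hlog := log_lt_two_mul_sub_one_div_add_one hx0 hx1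
    rw [lt_div_iff₀ (by linarith)] at hlog
    exact div_neg_of_neg_of_pos (by linarith) (pow_pos (sub_pos.2 hx1) 3)

theorem tendsto_klFun_div_one_sub_sq_nhdsLT_one :
    Tendsto (fun x => klFun x / (1 - x) ^ 2) (𝓝[<] 1) (𝓝 (1 / 2)) := by
  refine HasDerivAt.lhopital_zero_left_on_Ioc (f' := log) (g' := fun x => -(2 * (1 - x)))
    zero_lt_one (fun x hx => hasDerivAt_klFun hx.1.ne')
    (fun x _ => hasDerivAt_one_sub_sq x)
    continuous_klFun.continuousOn (by fun_prop)
    (fun x hx => by linarith [hx.2]) klFun_one (by simp) ?_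
  have hslope := tendsto_log_div_sub_one_nhdsNE_one.mono_left
    (nhdsWithin_mono 1 fun y (hy : y < 1) => hy.ne)
  refine (hslope.div_const 2).congr fun x => ?_
  rw [div_div]
  congr 1
  ring

/-- The function `f(x) = x log x/(1−x)² + 1/(1−x)` is strictly decreasing on `(0,1)`,
tends to `1/2` as `x → 1⁻`, and hence `f(x) > 1/2` on `(0,1)`. -/
theorem one_variable_function_properties :
    StrictAntiOn (fun x : ℝ => x * Real.log x / (1 - x) ^ 2 + 1 / (1 - x))
      (Set.Ioo (0 : ℝ) 1) ∧
    Tendsto (fun x : ℝ => x * Real.log x / (1 - x) ^ 2 + 1 / (1 - x))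
      (nhdsWithin 1 (Set.Iio 1)) (nhds (1 / 2)) ∧
    ∀ x ∈ Set.Ioo (0 : ℝ) 1,
      1 / 2 < x * Real.log x / (1 - x) ^ 2 + 1 / (1 - x) := by
  simp only [mul_log_div_one_sub_sq_add_one_div_one_sub]
  exact ⟨strictAntiOn_klFun_div_one_sub_sq, tendsto_klFun_div_one_sub_sq_nhdsLT_one,
    fun x hx => strictAntiOn_klFun_div_one_sub_sq.lt_of_tendsto_nhdsLT
      tendsto_klFun_div_one_sub_sq_nhdsLT_one hx⟩
end

section
/- Fix p, q ∈ (0,1). Then the function F(α) = α·( 1/(1−p^α) + 1/(1−q^α) − 1 ) is strictly increasing on (0,∞). -/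
/-!
Writing `p = e^{-a}` with `a = -log p > 0`, one has
`α / (1 - p^α) - α / 2 = g(aα) / a` for `g x = x / (1 - e^{-x}) - x / 2 = (x/2) coth (x/2)`,
so `F(α)` is the sum of two such terms. The function `g` is strictly increasing on `(0, ∞)`:
its derivative is positive exactly because `sinh x > x`.
-/

open Real

lemma two_mul_mul_exp_neg_lt_one_sub_exp_neg_sq {x : ℝ} (hx : 0 < x) :
    2 * x * exp (-x) < 1 - exp (-x) ^ 2 := by
  have hsinh : x < (exp x - exp (-x)) / 2 := sinh_eq x ▸ self_lt_sinh_iff.mpr hx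
  have hexp : exp x * exp (-x) = 1 := by rw [← exp_add, add_neg_cancel, exp_zero]
  nlinarith [exp_pos (-x)]

lemma one_sub_exp_neg_pos {x : ℝ} (hx : 0 < x) : 0 < 1 - exp (-x) := by
  have : exp (-x) < 1 := exp_lt_one_iff.mpr (neg_neg_of_pos hx)
  linarith

lemma hasDerivAt_self_div_one_sub_exp_neg_sub_half {x : ℝ} (hx : 0 < x) :
    HasDerivAt (fun x : ℝ => x / (1 - exp (-x)) - x / 2)
      ((1 - exp (-x) - x * exp (-x)) / (1 - exp (-x)) ^ 2 - 1 / 2) x := by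
  have hden : HasDerivAt (fun x : ℝ => 1 - exp (-x)) (exp (-x)) x := by
    simpa using ((hasDerivAt_exp (-x)).comp x (hasDerivAt_neg x)).const_sub 1
  exact (((hasDerivAt_id x).div hden (one_sub_exp_neg_pos hx).ne').sub
    ((hasDerivAt_id x).div_const 2)).congr_deriv (by simp)

lemma strictMonoOn_self_div_one_sub_exp_neg_sub_half :
    StrictMonoOn (fun x : ℝ => x / (1 - exp (-x)) - x / 2) (Set.Ioi 0) := by
  refine strictMonoOn_of_deriv_pos (convex_Ioi 0)
    (fun x hx => (hasDerivAt_self_div_one_sub_exp_neg_sub_half hx).continuousAt.continuousWithinAt)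
    fun x hx => ?_
  rw [interior_Ioi] at hx
  have hden := one_sub_exp_neg_pos hx
  rw [(hasDerivAt_self_div_one_sub_exp_neg_sub_half hx).deriv, div_sub' (pow_ne_zero 2 hden.ne')]
  have hkey := two_mul_mul_exp_neg_lt_one_sub_exp_neg_sq hx
  exact div_pos (by nlinarith) (by positivity)

lemma self_div_one_sub_rpow_sub_half_eq {p : ℝ} (hp : 0 < p) (hlog : log p ≠ 0) (α : ℝ) :
    α / (1 - p ^ α) - α / 2 =
      (-log p * α / (1 - exp (-(-log p * α))) - -log p * α / 2) / -log p := by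
  rw [rpow_def_of_pos hp, neg_mul, neg_neg]
  field_simp
  ring

lemma strictMonoOn_self_div_one_sub_rpow_sub_half {p : ℝ} (hp : p ∈ Set.Ioo (0 : ℝ) 1) :
    StrictMonoOn (fun α : ℝ => α / (1 - p ^ α) - α / 2) (Set.Ioi 0) := by
  have hlog : log p < 0 := log_neg hp.1 hp.2
  have ha : 0 < -log p := neg_pos.mpr hlog
  have hcomp := strictMonoOn_self_div_one_sub_exp_neg_sub_half.comp
    ((strictMono_mul_left_of_pos ha).strictMonoOn _) fun α (hα : 0 < α) => mul_pos ha hα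
  intro x hx y hy hxy
  simp only [self_div_one_sub_rpow_sub_half_eq hp.1 hlog.ne]
  exact div_lt_div_of_pos_right (hcomp hx hy hxy) ha

/-- For fixed `p, q ∈ (0,1)`, the function
`F(α) = α(1/(1−p^α) + 1/(1−q^α) − 1)` is strictly increasing on `(0,∞)`.
Here `p^α` denotes the real power. -/
theorem F_strictMonoOn (p q : ℝ)
    (hp : p ∈ Set.Ioo (0 : ℝ) 1) (hq : q ∈ Set.Ioo (0 : ℝ) 1) :
    StrictMonoOn
      (fun α : ℝ => α * (1 / (1 - p ^ α) + 1 / (1 - q ^ α) - 1))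
      (Set.Ioi (0 : ℝ)) := by
  have hsum := (strictMonoOn_self_div_one_sub_rpow_sub_half hp).add
    (strictMonoOn_self_div_one_sub_rpow_sub_half hq)
  convert hsum using 2 with α
  ring
end

section
/- Let f : ℤ → [0,∞) be summable and log-concave, with support equal to {0, 1, …, k−1} for some k ≥ 1 (or to {0, 1, 2, …} when the support is infinite), and suppose f is nonincreasing on its support. Then there exists a unique q ∈ [0,1) such that the function g : ℤ → [0,∞) defined by g(j) = f(0)·q^j for j ≥ 0 and g(j) = 0 for j < 0 satisfies ∑_j g(j) = ∑_j f(j); moreover f majorizes g. -/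
open Real

/-- The largest possible sum of `f` over `k` integers:
`sup { ∑_{i∈S} f(i) : S ⊆ ℤ finite, |S| = k }`. -/
noncomputable def maxSum (f : ℤ → ℝ) (k : ℕ) : ℝ :=
  ⨆ S : {S : Finset ℤ // S.card = k}, ∑ i ∈ S.1, f i

/-- `f` majorizes `g`: for each `k`, the sum of the `k` largest values of `f`
is at least that of `g`, and the total sums agree. -/
def Majorizes (f g : ℤ → ℝ) : Prop :=
  (∀ k : ℕ, maxSum g k ≤ maxSum f k) ∧ ∑' n, f n = ∑' n, g n

/-- `f` is log-concave: `f(n)² ≥ f(n−1)·f(n+1)` and contiguous support. -/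
def IsLogConcaveFun (f : ℤ → ℝ) : Prop :=
  (∀ n : ℤ, f (n - 1) * f (n + 1) ≤ f n ^ 2) ∧
  (∀ a b c : ℤ, a ≤ b → b ≤ c → 0 < f a → 0 < f c → 0 < f b)

/-! Log-concavity makes `f (n + 1) / f n` nonincreasing, so `f` and the geometric sequence
`g n = f 0 * q ^ n`, which share their first term, cross at most once: `f ≥ g` up to some index
and `f < g` after it. As the total sums agree, the partial sums of `f - g` never become
negative, so `∑_{n<k} g n ≤ ∑_{n<k} f n ≤ maxSum f k`, while no `k` values of `g` sum to more
than its first `k`. The parameter is forced by `f 0 / (1 - q) = ∑ f`. -/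

open Finset

theorem Antitone.sum_le_sum_range_card {M : Type*} [AddCommMonoid M] [PartialOrder M]
    [IsOrderedAddMonoid M] {G : ℕ → M} (hG : Antitone G) (T : Finset ℕ) :
    ∑ n ∈ T, G n ≤ ∑ n ∈ range #T, G n := by
  induction T using Finset.induction_on_max with
  | empty => simp
  | insert a T hlt ih =>
    have haT : a ∉ T := fun h => (hlt a h).false
    have hcard : #T ≤ a := by
      simpa using card_le_card fun x hx => mem_range.2 (hlt x hx)
    rw [sum_insert haT, card_insert_of_notMem haT, sum_range_succ, add_comm]
    exact add_le_add ih (hG hcard)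

theorem sum_range_le_sum_range_of_tsum_eq {F G : ℕ → ℝ} (hF : Summable F) (hG : Summable G)
    (hFG : ∑' n, F n = ∑' n, G n) {k : ℕ} (htail : ∀ m, k ≤ m → F m ≤ G m) :
    ∑ n ∈ range k, G n ≤ ∑ n ∈ range k, F n := by
  have htail_sum : ∑' n, F (n + k) ≤ ∑' n, G (n + k) :=
    Summable.tsum_le_tsum (fun n => htail _ (Nat.le_add_left k n))
      ((summable_nat_add_iff k).2 hF) ((summable_nat_add_iff k).2 hG)
  have := hF.sum_add_tsum_nat_add k
  have := hG.sum_add_tsum_nat_add k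
  linarith

section LogConcaveSeq

variable {F : ℕ → ℝ} (hF : ∀ n, 0 ≤ F n) (hlc : ∀ n, F n * F (n + 2) ≤ F (n + 1) ^ 2)
  (hpos : ∀ n, 0 < F (n + 1) → 0 < F n)
include hF hlc hpos

theorem ratio_antitone_of_logConcave {n m : ℕ} (hnm : n ≤ m) :
    F (m + 1) * F n ≤ F (n + 1) * F m := by
  induction m, hnm using Nat.le_induction with
  | base => exact le_rfl
  | succ m hnm ih =>
    rcases (hF (m + 1)).eq_or_lt with h0 | h0
    · have : F (m + 2) = 0 := by
        by_contra h
        exact (hpos (m + 1) ((hF _).lt_of_ne' h)).ne' h0.symm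
      rw [this, zero_mul]
      exact mul_nonneg (hF _) (hF _)
    · nlinarith [hlc m, hF (m + 2), hF (n + 1), hF n, hF m]

theorem succ_le_mul_of_lt_geom {q : ℝ} (hq : 0 ≤ q) {n : ℕ} (hn : F n < F 0 * q ^ n) :
    F (n + 1) ≤ q * F n := by
  by_contra! h
  have hFn : 0 < F n := hpos n ((mul_nonneg hq (hF n)).trans_lt h)
  -- a ratio `F (n+1) / F n > q` forces every earlier ratio above `q` as well
  have hstep : ∀ j ≤ n, q * F j ≤ F (j + 1) := fun j hj => by
    refine le_of_mul_le_mul_right ?_ hFn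
    nlinarith [ratio_antitone_of_logConcave hF hlc hpos hj, hF j]
  have hgeom : ∀ j ≤ n, F 0 * q ^ j ≤ F j := by
    intro j
    induction j with
    | zero => simp
    | succ j ih =>
      intro hj
      calc F 0 * q ^ (j + 1) = q * (F 0 * q ^ j) := by ring
        _ ≤ q * F j := mul_le_mul_of_nonneg_left (ih (by omega)) hq
        _ ≤ F (j + 1) := hstep j (by omega)
  exact (hgeom n le_rfl).not_gt hn

theorem lt_geom_of_lt_geom_of_le {q : ℝ} (hq : 0 ≤ q) {n : ℕ} (hn : F n < F 0 * q ^ n) {m : ℕ}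
    (hnm : n ≤ m) : F m < F 0 * q ^ m := by
  have hq' : 0 < q := by
    refine hq.lt_of_ne' fun hq0 => ?_
    subst hq0
    rcases n with _ | n
    · simp at hn
    · exact (hF _).not_gt (by simpa using hn)
  induction m, hnm using Nat.le_induction with
  | base => exact hn
  | succ m _ ih =>
    calc F (m + 1) ≤ q * F m := succ_le_mul_of_lt_geom hF hlc hpos hq ih
      _ < q * (F 0 * q ^ m) := mul_lt_mul_of_pos_left ih hq'
      _ = F 0 * q ^ (m + 1) := by ring

theorem sum_range_geom_le_of_logConcave {q : ℝ} (hq0 : 0 ≤ q) (hq1 : q < 1) (hsum : Summable F)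
    (htsum : ∑' n, F n = ∑' n, F 0 * q ^ n) (k : ℕ) :
    ∑ n ∈ range k, F 0 * q ^ n ≤ ∑ n ∈ range k, F n := by
  by_cases hcross : ∃ n < k, F n < F 0 * q ^ n
  · obtain ⟨n, hnk, hn⟩ := hcross
    refine sum_range_le_sum_range_of_tsum_eq hsum
      ((summable_geometric_of_lt_one hq0 hq1).mul_left _) htsum fun m hm => ?_
    exact (lt_geom_of_lt_geom_of_le hF hlc hpos hq0 hn (hnk.le.trans hm)).le
  · push Not at hcross
    exact sum_le_sum fun n hn => hcross n (mem_range.1 hn)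

end LogConcaveSeq

theorem tsum_int_eq_tsum_nat {M : Type*} [AddCommMonoid M] [TopologicalSpace M] {g : ℤ → M}
    (hg : Function.support g ⊆ Set.Ici 0) : ∑' j, g j = ∑' n : ℕ, g n :=
  (Nat.cast_injective.tsum_eq fun j hj => ⟨j.toNat, Int.toNat_of_nonneg (hg hj)⟩).symm

theorem tsum_int_geom_eq_tsum_nat (a q : ℝ) :
    ∑' j : ℤ, (if 0 ≤ j then a * q ^ j.toNat else 0) = ∑' n : ℕ, a * q ^ n := by
  rw [tsum_int_eq_tsum_nat (g := fun j : ℤ => if 0 ≤ j then a * q ^ j.toNat else 0)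
    fun j hj => by_contra fun h => hj (if_neg h)]
  simp

theorem sum_ite_le_sum_range_card {G : ℕ → ℝ} (hG : Antitone G) (hG0 : ∀ n, 0 ≤ G n)
    (S : Finset ℤ) : ∑ j ∈ S, (if 0 ≤ j then G j.toNat else 0) ≤ ∑ n ∈ range #S, G n := by
  have hinj : Set.InjOn ((↑) : ℕ → ℤ) (((↑) : ℕ → ℤ) ⁻¹' (S : Set ℤ)) :=
    Nat.cast_injective.injOn
  rw [← sum_preimage _ S hinj _ fun j _ hj => if_neg fun h => hj ⟨j.toNat, Int.toNat_of_nonneg h⟩]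
  simp only [Nat.cast_nonneg, if_true, Int.toNat_natCast]
  calc ∑ n ∈ S.preimage _ hinj, G n ≤ ∑ n ∈ range #(S.preimage _ hinj), G n :=
        hG.sum_le_sum_range_card _
    _ ≤ ∑ n ∈ range #S, G n := by
        refine sum_le_sum_of_subset_of_nonneg (range_subset_range.2 ?_) fun n _ _ => hG0 n
        exact card_le_card_of_injOn _ (fun n hn => mem_preimage.1 hn) Nat.cast_injective.injOn

theorem maxSum_le {f : ℤ → ℝ} {k : ℕ} {c : ℝ} (h : ∀ S : Finset ℤ, #S = k → ∑ i ∈ S, f i ≤ c) :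
    maxSum f k ≤ c := by
  obtain ⟨S, hS⟩ := Infinite.exists_subset_card_eq ℤ k
  have : Nonempty {S : Finset ℤ // #S = k} := ⟨⟨S, hS⟩⟩
  exact ciSup_le fun S => h S.1 S.2

theorem sum_range_le_maxSum {f : ℤ → ℝ} (hf : ∀ n, 0 ≤ f n) (hsum : Summable f) (k : ℕ) :
    ∑ n ∈ range k, f n ≤ maxSum f k := by
  have hbdd : BddAbove (Set.range fun S : {S : Finset ℤ // #S = k} => ∑ i ∈ S.1, f i) :=
    ⟨∑' n, f n, Set.forall_mem_range.2 fun S => hsum.sum_le_tsum S.1 fun i _ => hf i⟩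
  simpa [maxSum] using le_ciSup hbdd ⟨(range k).map Nat.castEmbedding, by simp⟩

theorem existsUnique_div_one_sub_eq {a s : ℝ} (ha : 0 < a) (has : a ≤ s) :
    ∃! q : ℝ, q ∈ Set.Ico (0 : ℝ) 1 ∧ a / (1 - q) = s := by
  have hs : 0 < s := ha.trans_le has
  refine ⟨1 - a / s, ⟨⟨?_, ?_⟩, ?_⟩, fun q ⟨hq, hqs⟩ => ?_⟩
  · linarith [(div_le_one hs).2 has]
  · linarith [div_pos ha hs]
  · rw [sub_sub_cancel, div_div_cancel₀ ha.ne']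
  · have : 0 < 1 - q := by linarith [hq.2]
    field_simp at hqs ⊢
    linarith

theorem IsLogConcaveFun.natCast_mul_le_sq {f : ℤ → ℝ} (hf : IsLogConcaveFun f) (n : ℕ) :
    f n * f ((n + 2 : ℕ) : ℤ) ≤ f ((n + 1 : ℕ) : ℤ) ^ 2 := by
  simpa [add_assoc, one_add_one_eq_two] using hf.1 (n + 1)

theorem IsLogConcaveFun.natCast_pos_of_succ_pos {f : ℤ → ℝ} (hf : IsLogConcaveFun f)
    (h0 : 0 < f 0) (n : ℕ) (hn : 0 < f ((n + 1 : ℕ) : ℤ)) : 0 < f n :=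
  hf.2 0 n (n + 1 : ℕ) (Int.natCast_nonneg n) (by omega) h0 hn

theorem exists_unique_geometric_majorized_general (f : ℤ → ℝ)
    (hnn : ∀ n, 0 ≤ f n) (hsum : Summable f) (hlc : IsLogConcaveFun f)
    (hsupp : (∃ k : ℤ, 1 ≤ k ∧ Function.support f = Set.Ico 0 k) ∨
      Function.support f = Set.Ici 0) :
    (∃! q : ℝ, q ∈ Set.Ico (0 : ℝ) 1 ∧
      (∑' j : ℤ, if 0 ≤ j then f 0 * q ^ j.toNat else 0) = ∑' n, f n) ∧
    (∀ q ∈ Set.Ico (0 : ℝ) 1,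
      (∑' j : ℤ, if 0 ≤ j then f 0 * q ^ j.toNat else 0) = ∑' n, f n →
      Majorizes f (fun j : ℤ => if 0 ≤ j then f 0 * q ^ j.toNat else 0)) := by
  have hsupp0 : Function.support f ⊆ Set.Ici 0 := by
    rcases hsupp with ⟨k, -, hs⟩ | hs
    exacts [hs ▸ Set.Ico_subset_Ici_self, hs.subset]
  have hf0 : 0 < f 0 := (hnn 0).lt_of_ne' <| show (0 : ℤ) ∈ Function.support f by
    rcases hsupp with ⟨k, hk, hs⟩ | hs
    exacts [hs ▸ ⟨le_rfl, hk⟩, hs ▸ Set.mem_Ici.2 le_rfl]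
  have hgeom : ∀ q ∈ Set.Ico (0 : ℝ) 1,
      ∑' j : ℤ, (if 0 ≤ j then f 0 * q ^ j.toNat else 0) = f 0 / (1 - q) := fun q hq => by
    rw [tsum_int_geom_eq_tsum_nat, tsum_mul_left, tsum_geometric_of_lt_one hq.1 hq.2,
      div_eq_mul_inv]
  refine ⟨?_, fun q hq heq => ⟨fun k => maxSum_le fun S hS => ?_, heq.symm⟩⟩
  · refine (existsUnique_congr fun q => and_congr_right fun hq => ?_).2
      (existsUnique_div_one_sub_eq hf0 (hsum.le_tsum 0 fun j _ => hnn j))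
    rw [hgeom q hq]
  have htsum : ∑' n : ℕ, f n = ∑' n : ℕ, f (0 : ℕ) * q ^ n := by
    rw [← tsum_int_eq_tsum_nat hsupp0, ← heq, tsum_int_geom_eq_tsum_nat, Nat.cast_zero]
  calc ∑ j ∈ S, (if 0 ≤ j then f 0 * q ^ j.toNat else 0)
      ≤ ∑ n ∈ range k, f 0 * q ^ n := hS ▸ sum_ite_le_sum_range_card
        (fun m n hmn => mul_le_mul_of_nonneg_left (pow_le_pow_of_le_one hq.1 hq.2.le hmn)
          hf0.le) (fun n => mul_nonneg hf0.le (pow_nonneg hq.1 n)) S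
    _ ≤ ∑ n ∈ range k, f n := by
      simpa using sum_range_geom_le_of_logConcave (F := fun n : ℕ => f n) (fun n => hnn n)
        hlc.natCast_mul_le_sq (hlc.natCast_pos_of_succ_pos hf0) hq.1 hq.2
        (hsum.comp_injective Nat.cast_injective) htsum k
    _ ≤ maxSum f k := sum_range_le_maxSum hnn hsum k

/-- If `f : ℤ → [0,∞)` is summable, log-concave, supported on `{0,…,k−1}` (some `k ≥ 1`)
or on `{0,1,2,…}`, and nonincreasing on its support, then there is a unique `q ∈ [0,1)`
such that the geometric function `g(j) = f(0)·q^j` (for `j ≥ 0`, `g = 0` for `j < 0`)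
has the same total sum as `f`; moreover `f` majorizes this `g`. -/
theorem exists_unique_geometric_majorized (f : ℤ → ℝ)
    (hnn : ∀ n, 0 ≤ f n) (hsum : Summable f) (hlc : IsLogConcaveFun f)
    (hsupp : (∃ k : ℤ, 1 ≤ k ∧ Function.support f = Set.Ico 0 k) ∨
      Function.support f = Set.Ici 0)
    (hmono : ∀ m n : ℤ, 0 ≤ m → m ≤ n → f n ≤ f m) :
    (∃! q : ℝ, q ∈ Set.Ico (0 : ℝ) 1 ∧
      (∑' j : ℤ, if 0 ≤ j then f 0 * q ^ j.toNat else 0) = ∑' n, f n) ∧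
    (∀ q ∈ Set.Ico (0 : ℝ) 1,
      (∑' j : ℤ, if 0 ≤ j then f 0 * q ^ j.toNat else 0) = ∑' n, f n →
      Majorizes f (fun j : ℤ => if 0 ≤ j then f 0 * q ^ j.toNat else 0)) :=
  exists_unique_geometric_majorized_general f hnn hsum hlc hsupp
end

section
/- Let f be a log-concave probability mass function on ℤ. Then there exists a two-sided geometric probability mass function φ on ℤ with sup_n φ(n) = sup_n f(n) such that f majorizes φ. -/
open Real

/-! Tail sums of a log-concave sequence are again log-concave, so the right tails `R(m + j)` of
`f` from a mode `m` decay at least geometrically, with ratio `p = R(m + 1) / R(m)`; the same holds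
for the left tails with some ratio `q`. The two-sided geometric `φ` with mode `m` and parameters
`p, q` has maximum `f m` and the same two tails at `m` as `f`, so its tails dominate those of `f`
on both sides. The `k` largest values of `φ` lie on an interval around `m`, and the mass of `f` on
that interval, being `1` minus the two tails outside it, is at least that of `φ`. -/

open Finset

noncomputable def rightTail (g : ℤ → ℝ) (c : ℤ) : ℝ := ∑' k : ℕ, g (c + k)

noncomputable def leftTail (g : ℤ → ℝ) (c : ℤ) : ℝ := ∑' k : ℕ, g (c - k)

noncomputable def tailRatio (g : ℤ → ℝ) (c : ℤ) : ℝ := rightTail g (c + 1) / rightTail g c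

section Tails

variable {g : ℤ → ℝ}

lemma Summable.comp_add_natCast (hs : Summable g) (c : ℤ) : Summable fun k : ℕ => g (c + k) :=
  hs.comp_injective fun _ _ h => by simpa using h

lemma Summable.comp_sub_natCast (hs : Summable g) (c : ℤ) : Summable fun k : ℕ => g (c - k) :=
  hs.comp_injective fun _ _ h => by simpa using h

lemma rightTail_nonneg (hg : ∀ n, 0 ≤ g n) (c : ℤ) : 0 ≤ rightTail g c :=
  tsum_nonneg fun _ => hg _

lemma rightTail_eq_add (hs : Summable g) (c : ℤ) : rightTail g c = g c + rightTail g (c + 1) := by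
  rw [rightTail, (hs.comp_add_natCast c).tsum_eq_zero_add, rightTail]
  simp only [Nat.cast_zero, add_zero, Nat.cast_add, Nat.cast_one]
  congr 1
  exact tsum_congr fun k => by rw [add_comm (k : ℤ), add_assoc]

lemma rightTail_eq_sum_Ico_add (hs : Summable g) (a : ℤ) (t : ℕ) :
    rightTail g a = ∑ n ∈ Ico a (a + t), g n + rightTail g (a + t) := by
  rw [rightTail, ← (hs.comp_add_natCast a).sum_add_tsum_nat_add t, Int.Ico_eq_finset_map, sum_map]
  simp [rightTail, add_assoc, add_comm]

lemma leftTail_eq_rightTail_neg (c : ℤ) : leftTail g c = rightTail (fun n => g (-n)) (-c) :=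
  tsum_congr fun k => by simp only [neg_add, neg_neg, sub_eq_add_neg]

lemma hasSum_add_of_hasSum_tails {a b : ℝ} (c : ℤ) (hl : HasSum (fun k : ℕ => g (c - k)) a)
    (hr : HasSum (fun k : ℕ => g (c + 1 + k)) b) : HasSum g (a + b) := by
  rw [add_comm, ← (Equiv.addRight (c + 1)).hasSum_iff]
  refine HasSum.of_nat_of_neg_add_one ?_ ?_
  · convert hr using 2 with k
    simp only [Function.comp, Equiv.coe_addRight]
    ring_nf
  · convert hl using 2 with k
    simp only [Function.comp, Equiv.coe_addRight]
    ring_nf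

lemma tsum_eq_leftTail_add_rightTail (hs : Summable g) (c : ℤ) :
    ∑' n, g n = leftTail g c + rightTail g (c + 1) :=
  (hasSum_add_of_hasSum_tails c (hs.comp_sub_natCast c).hasSum
    (hs.comp_add_natCast (c + 1)).hasSum).tsum_eq

lemma sum_Ico_eq_tsum_sub_tails (hs : Summable g) (m : ℤ) (l r : ℕ) :
    ∑ n ∈ Ico (m - l) (m + (r + 1 : ℕ)), g n =
      ∑' n, g n - leftTail g (m - (l + 1 : ℕ)) - rightTail g (m + (r + 1 : ℕ)) := by
  have hsplit := tsum_eq_leftTail_add_rightTail hs (m - (l + 1 : ℕ))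
  have hIco := rightTail_eq_sum_Ico_add hs (m - l) (l + r + 1)
  have e1 : m - ((l + 1 : ℕ) : ℤ) + 1 = m - l := by push_cast; ring
  have e2 : m - l + ((l + r + 1 : ℕ) : ℤ) = m + (r + 1 : ℕ) := by push_cast; ring
  rw [e1] at hsplit
  rw [e2] at hIco
  linarith

end Tails

section LogConcave

variable {g : ℤ → ℝ}

lemma IsLogConcavePMF.comp_neg_s9 (hlc : IsLogConcavePMF g) : IsLogConcavePMF fun n => g (-n) := by
  refine ⟨fun n => ?_, fun a b c hab hbc ha hc => hlc.2 (-c) (-b) (-a) (by omega) (by omega) hc ha⟩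
  show g (-(n - 1)) * g (-(n + 1)) ≤ g (-n) ^ 2
  rw [show -(n - 1) = -n + 1 by ring, show -(n + 1) = -n - 1 by ring, mul_comm]
  exact hlc.1 (-n)

lemma IsLogConcavePMF.mul_succ_le_mul (hg : ∀ n, 0 ≤ g n) (hlc : IsLogConcavePMF g) {n k : ℤ}
    (hnk : n ≤ k) : g n * g (k + 1) ≤ g (n + 1) * g k := by
  induction k, hnk using Int.leInduction with
  | base => rw [mul_comm]
  | succ k hnk ih =>
    by_cases hpos : 0 < g n ∧ 0 < g (k + 1 + 1)
    · -- contiguity of the support makes `g k` positive, so it can be cancelled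
      have hk : 0 < g k := hlc.2 n k (k + 1 + 1) hnk (by omega) hpos.1 hpos.2
      have hsq : g k * g (k + 1 + 1) ≤ g (k + 1) ^ 2 := by
        simpa using hlc.1 (k + 1)
      refine le_of_mul_le_mul_left ?_ hk
      calc g k * (g n * g (k + 1 + 1)) = g n * (g k * g (k + 1 + 1)) := by ring
        _ ≤ g n * g (k + 1) ^ 2 := mul_le_mul_of_nonneg_left hsq (hg n)
        _ = g (k + 1) * (g n * g (k + 1)) := by ring
        _ ≤ g (k + 1) * (g (n + 1) * g k) := mul_le_mul_of_nonneg_left ih (hg _)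
        _ = g k * (g (n + 1) * g (k + 1)) := by ring
    · rcases not_and_or.1 hpos with h | h
      · rw [le_antisymm (not_lt.1 h) (hg n), zero_mul]
        exact mul_nonneg (hg _) (hg _)
      · rw [le_antisymm (not_lt.1 h) (hg _), mul_zero]
        exact mul_nonneg (hg _) (hg _)

lemma IsLogConcavePMF.mul_rightTail_le (hg : ∀ n, 0 ≤ g n) (hs : Summable g)
    (hlc : IsLogConcavePMF g) (c : ℤ) :
    g c * rightTail g (c + 2) ≤ g (c + 1) * rightTail g (c + 1) := by
  rw [rightTail, rightTail, ← tsum_mul_left, ← tsum_mul_left]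
  refine Summable.tsum_le_tsum (fun k => ?_) ((hs.comp_add_natCast _).mul_left _)
    ((hs.comp_add_natCast _).mul_left _)
  have h := hlc.mul_succ_le_mul hg (show c ≤ c + 1 + k by omega)
  rwa [show c + 1 + (k : ℤ) + 1 = c + 2 + k by ring] at h

lemma IsLogConcavePMF.rightTail_mul_le_sq (hg : ∀ n, 0 ≤ g n) (hs : Summable g)
    (hlc : IsLogConcavePMF g) (c : ℤ) :
    rightTail g c * rightTail g (c + 2) ≤ rightTail g (c + 1) ^ 2 := by
  have h0 := rightTail_eq_add hs c
  have h1 := rightTail_eq_add hs (c + 1)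
  rw [show c + 1 + 1 = c + 2 by ring] at h1
  calc rightTail g c * rightTail g (c + 2)
      = g c * rightTail g (c + 2) + rightTail g (c + 1) * rightTail g (c + 2) := by rw [h0]; ring
    _ ≤ g (c + 1) * rightTail g (c + 1) + rightTail g (c + 1) * rightTail g (c + 2) :=
        add_le_add_left (hlc.mul_rightTail_le hg hs c) _
    _ = rightTail g (c + 1) ^ 2 := by rw [h1]; ring

end LogConcave

lemma le_mul_pow_of_logConcave {u : ℕ → ℝ} (hu : ∀ n, 0 ≤ u n) (hanti : Antitone u)
    (hlc : ∀ n, u n * u (n + 2) ≤ u (n + 1) ^ 2) (h0 : 0 < u 0) (n : ℕ) :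
    u n ≤ u 0 * (u 1 / u 0) ^ n := by
  have hratio : ∀ n, u (n + 1) * u 0 ≤ u n * u 1 := by
    intro n
    induction n with
    | zero => rw [mul_comm]
    | succ n ih =>
      rcases (hu n).lt_or_eq with hn | hn
      · refine le_of_mul_le_mul_left ?_ hn
        calc u n * (u (n + 2) * u 0) = u 0 * (u n * u (n + 2)) := by ring
          _ ≤ u 0 * u (n + 1) ^ 2 := mul_le_mul_of_nonneg_left (hlc n) (hu 0)
          _ = u (n + 1) * (u (n + 1) * u 0) := by ring
          _ ≤ u (n + 1) * (u n * u 1) := mul_le_mul_of_nonneg_left ih (hu _)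
          _ = u n * (u (n + 1) * u 1) := by ring
      · have hle : u (n + 2) ≤ u n := hanti (by omega)
        rw [le_antisymm (hle.trans_eq hn.symm) (hu (n + 2)), zero_mul]
        exact mul_nonneg (hu _) (hu _)
  induction n with
  | zero => simp
  | succ n ih =>
    calc u (n + 1) ≤ u n * (u 1 / u 0) := by
          rw [mul_div_assoc', le_div_iff₀ h0]; exact hratio n
      _ ≤ u 0 * (u 1 / u 0) ^ n * (u 1 / u 0) :=
          mul_le_mul_of_nonneg_right ih (div_nonneg (hu 1) h0.le)
      _ = u 0 * (u 1 / u 0) ^ (n + 1) := by ring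

section TailRatio

variable {f : ℤ → ℝ} {m : ℤ}

lemma rightTail_pos (hf : ∀ n, 0 ≤ f n) (hs : Summable f) (hm : 0 < f m) : 0 < rightTail f m := by
  rw [rightTail_eq_add hs]
  linarith [rightTail_nonneg hf (m + 1)]

lemma one_sub_tailRatio (hs : Summable f) (hpos : rightTail f m ≠ 0) :
    1 - tailRatio f m = f m / rightTail f m := by
  rw [tailRatio, eq_div_iff hpos, sub_mul, div_mul_cancel₀ _ hpos, rightTail_eq_add hs m]
  ring

lemma tailRatio_mem_Ico (hf : ∀ n, 0 ≤ f n) (hs : Summable f) (hm : 0 < f m) :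
    tailRatio f m ∈ Set.Ico 0 1 := by
  have hpos := rightTail_pos hf hs hm
  refine ⟨div_nonneg (rightTail_nonneg hf _) hpos.le, ?_⟩
  linarith [one_sub_tailRatio hs hpos.ne', div_pos hm hpos]

lemma IsLogConcavePMF.rightTail_le_mul_tailRatio_pow (hf : ∀ n, 0 ≤ f n) (hs : Summable f)
    (hlc : IsLogConcavePMF f) (hm : 0 < f m) (j : ℕ) :
    rightTail f (m + j) ≤ rightTail f m * tailRatio f m ^ j := by
  have hanti : Antitone fun j : ℕ => rightTail f (m + j) := antitone_nat_of_succ_le fun j => by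
    rw [rightTail_eq_add hs (m + j), Nat.cast_succ, ← add_assoc]
    linarith [hf (m + j)]
  have hsq (j : ℕ) : rightTail f (m + j) * rightTail f (m + (j + 2 : ℕ)) ≤
      rightTail f (m + (j + 1 : ℕ)) ^ 2 := by
    convert hlc.rightTail_mul_le_sq hf hs (m + j) using 3 <;> push_cast <;> ring
  simpa [tailRatio] using le_mul_pow_of_logConcave (fun _ => rightTail_nonneg hf _) hanti hsq
    (by simpa using rightTail_pos hf hs hm) j

end TailRatio

section TwoSidedGeom

variable {p q : ℝ}

lemma twoSidedGeom_neg (p q : ℝ) (m n : ℤ) : twoSidedGeom p q m (-n) = twoSidedGeom q p (-m) n := by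
  simp only [twoSidedGeom, mul_comm (1 - p), mul_comm p]
  split_ifs with h1 h2 h2
  · rw [show (-n - m).toNat = 0 by omega, show (n - -m).toNat = 0 by omega, pow_zero, pow_zero]
  · congr 2; omega
  · congr 2; omega
  · omega

lemma twoSidedGeom_add_natCast (p q : ℝ) (m : ℤ) (j : ℕ) :
    twoSidedGeom p q m (m + j) = (1 - p) * (1 - q) / (1 - p * q) * p ^ j := by
  simp [twoSidedGeom]

lemma twoSidedGeom_sub_natCast (p q : ℝ) (m : ℤ) (j : ℕ) :
    twoSidedGeom p q m (m - j) = (1 - p) * (1 - q) / (1 - p * q) * q ^ j := by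
  rw [show m - j = -(-m + j) by ring, twoSidedGeom_neg, twoSidedGeom_add_natCast,
    mul_comm (1 - q), mul_comm q]

lemma twoSidedGeom_const_pos (hp : p ∈ Set.Ico 0 1) (hq : q ∈ Set.Ico 0 1) :
    0 < (1 - p) * (1 - q) / (1 - p * q) := by
  have hpq : p * q < 1 := by nlinarith [hp.1, hp.2, hq.1, hq.2]
  exact div_pos (mul_pos (sub_pos.2 hp.2) (sub_pos.2 hq.2)) (sub_pos.2 hpq)

lemma twoSidedGeom_le_const (hp : p ∈ Set.Ico 0 1) (hq : q ∈ Set.Ico 0 1) (m n : ℤ) :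
    twoSidedGeom p q m n ≤ (1 - p) * (1 - q) / (1 - p * q) := by
  refine mul_le_of_le_one_right (twoSidedGeom_const_pos hp hq).le ?_
  split_ifs
  exacts [pow_le_one₀ hp.1 hp.2.le, pow_le_one₀ hq.1 hq.2.le]

lemma twoSidedGeom_nonneg (hp : p ∈ Set.Ico 0 1) (hq : q ∈ Set.Ico 0 1) (m n : ℤ) :
    0 ≤ twoSidedGeom p q m n := by
  have := hp.1; have := hq.1
  exact mul_nonneg (twoSidedGeom_const_pos hp hq).le (by split_ifs <;> positivity)

lemma iSup_twoSidedGeom (hp : p ∈ Set.Ico 0 1) (hq : q ∈ Set.Ico 0 1) (m : ℤ) :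
    ⨆ n, twoSidedGeom p q m n = (1 - p) * (1 - q) / (1 - p * q) := by
  have hm : twoSidedGeom p q m m = (1 - p) * (1 - q) / (1 - p * q) := by
    simpa using twoSidedGeom_add_natCast p q m 0
  exact ciSup_eq_of_forall_le_of_forall_lt_exists_gt (twoSidedGeom_le_const hp hq m)
    fun w hw => ⟨m, hm ▸ hw⟩

lemma rightTail_twoSidedGeom (hp : p ∈ Set.Ico 0 1) (q : ℝ) (m : ℤ) (j : ℕ) :
    rightTail (twoSidedGeom p q m) (m + j) =
      (1 - p) * (1 - q) / (1 - p * q) * (p ^ j / (1 - p)) := by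
  have hterm (k : ℕ) : twoSidedGeom p q m (m + j + k) =
      (1 - p) * (1 - q) / (1 - p * q) * p ^ j * p ^ k := by
    rw [add_assoc, ← Nat.cast_add, twoSidedGeom_add_natCast, pow_add, mul_assoc]
  rw [rightTail, tsum_congr hterm, tsum_mul_left, tsum_geometric_of_lt_one hp.1 hp.2]
  ring

lemma isPMF_twoSidedGeom (hp : p ∈ Set.Ico 0 1) (hq : q ∈ Set.Ico 0 1) (m : ℤ) :
    IsPMF (twoSidedGeom p q m) := by
  set C := (1 - p) * (1 - q) / (1 - p * q)
  have hl : HasSum (fun k : ℕ => twoSidedGeom p q m (m - k)) (C * (1 - q)⁻¹) := by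
    simpa only [twoSidedGeom_sub_natCast] using (hasSum_geometric_of_lt_one hq.1 hq.2).mul_left C
  have hr : HasSum (fun k : ℕ => twoSidedGeom p q m (m + 1 + k)) (C * p * (1 - p)⁻¹) := by
    have hterm (k : ℕ) : twoSidedGeom p q m (m + 1 + k) = C * p * p ^ k := by
      rw [add_assoc, ← Nat.cast_one, ← Nat.cast_add, twoSidedGeom_add_natCast, add_comm, pow_succ']
      ring
    simpa only [hterm] using (hasSum_geometric_of_lt_one hp.1 hp.2).mul_left (C * p)
  have hsum := hasSum_add_of_hasSum_tails m hl hr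
  have hpq : p * q < 1 := by nlinarith [hp.1, hp.2, hq.1, hq.2]
  have h1 : C * (1 - q)⁻¹ + C * p * (1 - p)⁻¹ = 1 := by
    have := (sub_pos.2 hp.2).ne'; have := (sub_pos.2 hq.2).ne'; have := (sub_pos.2 hpq).ne'
    simp only [C]
    field_simp
    ring
  rw [h1] at hsum
  exact ⟨twoSidedGeom_nonneg hp hq m, hsum.summable, hsum.tsum_eq⟩

end TwoSidedGeom

section TwoSidedGeomLevels

variable {p q : ℝ} (hp : p ∈ Set.Ico 0 1) (hq : q ∈ Set.Ico 0 1) {m n : ℤ} {l r : ℕ}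
include hp hq

lemma const_mul_min_le_twoSidedGeom (hn : n ∈ Ico (m - l) (m + (r + 1 : ℕ))) :
    (1 - p) * (1 - q) / (1 - p * q) * min (q ^ l) (p ^ r) ≤ twoSidedGeom p q m n := by
  rw [mem_Ico] at hn
  refine mul_le_mul_of_nonneg_left ?_ (twoSidedGeom_const_pos hp hq).le
  split_ifs
  · exact (min_le_right _ _).trans (pow_le_pow_of_le_one hp.1 hp.2.le (by omega))
  · exact (min_le_left _ _).trans (pow_le_pow_of_le_one hq.1 hq.2.le (by omega))

lemma twoSidedGeom_le_const_mul_max (hn : n ∉ Ico (m - l) (m + (r + 1 : ℕ))) :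
    twoSidedGeom p q m n ≤ (1 - p) * (1 - q) / (1 - p * q) * max (q ^ (l + 1)) (p ^ (r + 1)) := by
  rw [mem_Ico, not_and_or, not_le, not_lt] at hn
  refine mul_le_mul_of_nonneg_left ?_ (twoSidedGeom_const_pos hp hq).le
  split_ifs
  · exact (pow_le_pow_of_le_one hp.1 hp.2.le (by omega)).trans (le_max_right _ _)
  · exact (pow_le_pow_of_le_one hq.1 hq.2.le (by omega)).trans (le_max_left _ _)

end TwoSidedGeomLevels

lemma IsLogConcavePMF.rightTail_le_rightTail_twoSidedGeom {f : ℤ → ℝ} (hf : ∀ n, 0 ≤ f n)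
    (hs : Summable f) (hlc : IsLogConcavePMF f) {m : ℤ} (hm : 0 < f m) (q : ℝ)
    (hC : (1 - tailRatio f m) * (1 - q) / (1 - tailRatio f m * q) = f m) (j : ℕ) :
    rightTail f (m + j) ≤ rightTail (twoSidedGeom (tailRatio f m) q m) (m + j) := by
  have hpos := rightTail_pos hf hs hm
  rw [rightTail_twoSidedGeom (tailRatio_mem_Ico hf hs hm), hC, one_sub_tailRatio hs hpos.ne']
  calc rightTail f (m + j) ≤ rightTail f m * tailRatio f m ^ j :=
        hlc.rightTail_le_mul_tailRatio_pow hf hs hm j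
    _ = f m * (tailRatio f m ^ j / (f m / rightTail f m)) := by field_simp

lemma twoSidedGeom_const_eq {p q M R L : ℝ} (hM : 0 < M) (hR : 0 < R) (hL : 0 < L)
    (hRL : R + L = 1 + M) (hp : 1 - p = M / R) (hq : 1 - q = M / L) :
    (1 - p) * (1 - q) / (1 - p * q) = M := by
  obtain rfl : p = 1 - M / R := by linarith
  obtain rfl : q = 1 - M / L := by linarith
  have hden : 1 - (1 - M / R) * (1 - M / L) = M / (R * L) := by
    field_simp
    linear_combination M * hRL
  rw [hp, hq, hden]
  field_simp

lemma IsPMF.twoSidedGeom_const_tailRatio {f : ℤ → ℝ} (hf : IsPMF f) {m : ℤ} (hm : 0 < f m) :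
    (1 - tailRatio f m) * (1 - tailRatio (fun n => f (-n)) (-m)) /
      (1 - tailRatio f m * tailRatio (fun n => f (-n)) (-m)) = f m := by
  obtain ⟨hf, hs, hsum⟩ := hf
  have hs' : Summable fun n => f (-n) := hs.comp_injective neg_injective
  have hR := rightTail_pos hf hs hm
  have hL := rightTail_pos (fun n => hf (-n)) hs' (by rwa [neg_neg] : 0 < f (- -m))
  refine twoSidedGeom_const_eq hm hR hL ?_ (one_sub_tailRatio hs hR.ne')
    (by simpa using one_sub_tailRatio hs' hL.ne')
  have hsplit := tsum_eq_leftTail_add_rightTail hs m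
  rw [leftTail_eq_rightTail_neg, hsum] at hsplit
  linarith [rightTail_eq_add hs m]

/-- Greedy choice of the interval `[m - l, m + r]` carrying the `t + 1` largest values of a
two-sided geometric with mode `m` and parameters `p, q`. -/
lemma exists_add_eq_pow_succ_le {p q : ℝ} (hp₀ : 0 ≤ p) (hp₁ : p ≤ 1) (hq₀ : 0 ≤ q) (hq₁ : q ≤ 1)
    (t : ℕ) : ∃ l r : ℕ, l + r = t ∧ p ^ (r + 1) ≤ q ^ l ∧ q ^ (l + 1) ≤ p ^ r := by
  induction t with
  | zero => exact ⟨0, 0, rfl, by simpa using hp₁, by simpa using hq₁⟩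
  | succ t ih =>
    obtain ⟨l, r, hlr, hpq, hqp⟩ := ih
    rcases le_total (p ^ (r + 1)) (q ^ (l + 1)) with h | h
    · exact ⟨l + 1, r, by omega, h, (pow_le_pow_of_le_one hq₀ hq₁ (by omega)).trans hqp⟩
    · exact ⟨l, r + 1, by omega, (pow_le_pow_of_le_one hp₀ hp₁ (by omega)).trans hpq, h⟩

lemma sum_le_sum_of_card_eq_of_threshold {α : Type*} [DecidableEq α] {φ : α → ℝ} {S J : Finset α}
    (hcard : S.card = J.card) {c : ℝ} (hin : ∀ n ∈ J, c ≤ φ n) (hout : ∀ n ∉ J, φ n ≤ c) :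
    ∑ n ∈ S, φ n ≤ ∑ n ∈ J, φ n := by
  rw [← sum_inter_add_sum_sdiff S J, ← sum_inter_add_sum_sdiff J S, inter_comm]
  have hout' : ∑ n ∈ S \ J, φ n ≤ (S \ J).card • c :=
    sum_le_card_nsmul _ _ _ fun n hn => hout n (mem_sdiff.1 hn).2
  have hin' : (J \ S).card • c ≤ ∑ n ∈ J \ S, φ n :=
    card_nsmul_le_sum _ _ _ fun n hn => hin n (mem_sdiff.1 hn).1
  rw [card_sdiff_comm hcard] at hout'
  linarith

lemma maxSum_zero (f : ℤ → ℝ) : maxSum f 0 = 0 := by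
  have : ∀ S : {S : Finset ℤ // S.card = 0}, ∑ i ∈ S.1, f i = 0 := fun S => by
    rw [card_eq_zero.1 S.2, sum_empty]
  simp only [maxSum, this, Real.iSup_const_zero]

lemma sum_le_maxSum {f : ℤ → ℝ} (hf : ∀ n, 0 ≤ f n) (hs : Summable f) (J : Finset ℤ) :
    ∑ n ∈ J, f n ≤ maxSum f J.card :=
  le_ciSup (f := fun S : {S : Finset ℤ // S.card = J.card} => ∑ i ∈ S.1, f i)
    ⟨∑' n, f n, by rintro _ ⟨S, rfl⟩; exact hs.sum_le_tsum _ fun n _ => hf n⟩ ⟨J, rfl⟩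

lemma maxSum_le_sum_of_threshold {φ : ℤ → ℝ} {J : Finset ℤ} {c : ℝ} (hin : ∀ n ∈ J, c ≤ φ n)
    (hout : ∀ n ∉ J, φ n ≤ c) : maxSum φ J.card ≤ ∑ n ∈ J, φ n :=
  haveI : Nonempty {S : Finset ℤ // S.card = J.card} := ⟨⟨J, rfl⟩⟩
  ciSup_le fun S => sum_le_sum_of_card_eq_of_threshold S.2 hin hout

lemma majorizes_of_tails_le {f g : ℤ → ℝ} (hf : IsPMF f) (hg : IsPMF g) (m : ℤ)
    (htop : ∀ t : ℕ, ∃ l r : ℕ, l + r = t ∧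
      maxSum g (t + 1) ≤ ∑ n ∈ Ico (m - l) (m + (r + 1 : ℕ)), g n)
    (hright : ∀ j : ℕ, rightTail f (m + j) ≤ rightTail g (m + j))
    (hleft : ∀ j : ℕ, leftTail f (m - j) ≤ leftTail g (m - j)) : Majorizes f g := by
  refine ⟨fun k => ?_, hf.2.2.trans hg.2.2.symm⟩
  rcases k with _ | t
  · rw [maxSum_zero, maxSum_zero]
  obtain ⟨l, r, hlr, hg_top⟩ := htop t
  have hcard : (Ico (m - l) (m + (r + 1 : ℕ))).card = t + 1 := by
    rw [Int.card_Ico]; omega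
  calc maxSum g (t + 1) ≤ ∑ n ∈ Ico (m - l) (m + (r + 1 : ℕ)), g n := hg_top
    _ ≤ ∑ n ∈ Ico (m - l) (m + (r + 1 : ℕ)), f n := by
      rw [sum_Ico_eq_tsum_sub_tails hg.2.1, sum_Ico_eq_tsum_sub_tails hf.2.1, hf.2.2, hg.2.2]
      linarith [hleft (l + 1), hright (r + 1)]
    _ ≤ maxSum f (t + 1) := hcard ▸ sum_le_maxSum hf.1 hf.2.1 _

lemma maxSum_twoSidedGeom_le {p q : ℝ} (hp : p ∈ Set.Ico 0 1) (hq : q ∈ Set.Ico 0 1) (m : ℤ)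
    (t : ℕ) : ∃ l r : ℕ, l + r = t ∧
      maxSum (twoSidedGeom p q m) (t + 1) ≤
        ∑ n ∈ Ico (m - l) (m + (r + 1 : ℕ)), twoSidedGeom p q m n := by
  obtain ⟨l, r, hlr, hpq, hqp⟩ := exists_add_eq_pow_succ_le hp.1 hp.2.le hq.1 hq.2.le t
  refine ⟨l, r, hlr, ?_⟩
  have hcard : (Ico (m - l) (m + (r + 1 : ℕ))).card = t + 1 := by
    rw [Int.card_Ico]; omega
  have hlevel : max (q ^ (l + 1)) (p ^ (r + 1)) ≤ min (q ^ l) (p ^ r) :=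
    max_le (le_min (pow_le_pow_of_le_one hq.1 hq.2.le (by omega)) hqp)
      (le_min hpq (pow_le_pow_of_le_one hp.1 hp.2.le (by omega)))
  rw [← hcard]
  exact maxSum_le_sum_of_threshold (fun n hn => const_mul_min_le_twoSidedGeom hp hq hn) fun n hn =>
    (twoSidedGeom_le_const_mul_max hp hq hn).trans
      (mul_le_mul_of_nonneg_left hlevel (twoSidedGeom_const_pos hp hq).le)

lemma Summable.exists_forall_le_of_pos {α : Type*} {f : α → ℝ} (hs : Summable f) {a : α}
    (ha : 0 < f a) : ∃ m, ∀ n, f n ≤ f m := by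
  have hfin : {n | f a ≤ f n}.Finite := by
    have := hs.tendsto_cofinite_zero.eventually (gt_mem_nhds ha)
    simpa only [Filter.eventually_cofinite, not_lt] using this
  obtain ⟨m, hma, hm⟩ := Set.exists_max_image _ f hfin ⟨a, le_refl (f a)⟩
  refine ⟨m, fun n => ?_⟩
  by_cases hn : f a ≤ f n
  · exact hm n hn
  · exact (not_le.1 hn).le.trans hma

lemma IsPMF.exists_mode {f : ℤ → ℝ} (hf : IsPMF f) : ∃ m, 0 < f m ∧ ∀ n, f n ≤ f m := by
  obtain ⟨a, ha⟩ : ∃ a, 0 < f a := by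
    by_contra! h
    have : ∑' n, f n = 0 := by simp [fun n => le_antisymm (h n) (hf.1 n)]
    linarith [hf.2.2]
  obtain ⟨m, hm⟩ := hf.2.1.exists_forall_le_of_pos ha
  exact ⟨m, ha.trans_le (hm a), hm⟩

/-- Every log-concave pmf on `ℤ` majorizes a two-sided geometric pmf with the same
maximum value. -/
theorem logConcave_majorizes_twoSidedGeom (f : ℤ → ℝ)
    (hpmf : IsPMF f) (hlc : IsLogConcavePMF f) :
    ∃ (p q : ℝ) (m : ℤ), p ∈ Set.Ico (0 : ℝ) 1 ∧ q ∈ Set.Ico (0 : ℝ) 1 ∧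
      (⨆ n, twoSidedGeom p q m n) = (⨆ n, f n) ∧
      Majorizes f (twoSidedGeom p q m) := by
  obtain ⟨m, hm, hmax⟩ := hpmf.exists_mode
  have hC := hpmf.twoSidedGeom_const_tailRatio hm
  obtain ⟨hf, hs, hsum⟩ := hpmf
  set f' : ℤ → ℝ := fun n => f (-n)
  have hf' : ∀ n, 0 ≤ f' n := fun n => hf (-n)
  have hs' : Summable f' := hs.comp_injective neg_injective
  have hm' : 0 < f' (-m) := by simpa [f'] using hm
  have hp := tailRatio_mem_Ico hf hs hm
  have hq := tailRatio_mem_Ico hf' hs' hm'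
  refine ⟨_, _, m, hp, hq, ?_, majorizes_of_tails_le ⟨hf, hs, hsum⟩ (isPMF_twoSidedGeom hp hq m) m
    (maxSum_twoSidedGeom_le hp hq m) (hlc.rightTail_le_rightTail_twoSidedGeom hf hs hm _ hC)
    fun j => ?_⟩
  · rw [iSup_twoSidedGeom hp hq, hC]
    exact (ciSup_eq_of_forall_le_of_forall_lt_exists_gt hmax fun w hw => ⟨m, hw⟩).symm
  · -- left tails of `f` and of the two-sided geometric are right tails of their reflections
    have h := hlc.comp_neg_s9.rightTail_le_rightTail_twoSidedGeom hf' hs' hm' (tailRatio f m)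
      (by rw [mul_comm (1 - _), mul_comm (tailRatio f' _), hC]; simp [f']) j
    simp only [leftTail_eq_rightTail_neg, twoSidedGeom_neg] at h ⊢
    rwa [show -(m - j) = -m + j by ring]
end

section
/- Let X and Y be independent identically distributed random vectors in ℝ^d with the exponential product density f(x) = e^{−∑_{i=1}^d x_i}·𝟙_{(0,∞)^d}(x). Then for every α ∈ (0,∞], h_α(X − Y) = h_α(X) + d·log 2. -/
/-!
The difference of two independent standard exponential variables has the Laplace density
`ℓ(t) = e^{-|t|}/2`, and since `f` is a product density, so is the density of `X - Y`: it is
the product of `d` Laplace densities. Rényi entropies of product densities are `d` times the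
one-dimensional ones (`∫ (∏ u)^p = (∫ u^p)^d`, and the logarithm of a product is a sum), and
for the one-dimensional exponential density `e` we have `∫ ℓ^p = 2^(1-p) ∫ e^p`,
`∫ ℓ log ℓ = ∫ e log e - log 2` and `sup ℓ = sup e / 2`: each shifts the entropy by `log 2`.
-/

open Real MeasureTheory ENNReal

/-- Rényi entropy of order `α ∈ (0,∞]` of a density `f` on `ℝ^d`. -/
noncomputable def contRenyiEnt (d : ℕ) (α : ℝ≥0∞) (f : (Fin d → ℝ) → ℝ) : ℝ :=
  if α = ⊤ then -Real.log (essSup f volume)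
  else if α = 1 then -∫ x, f x * Real.log (f x)
  else (1 - α.toReal)⁻¹ * Real.log (∫ x, f x ^ α.toReal)

/-- The exponential product density on `ℝ^d`:
`f(x) = e^{−∑ xᵢ}` on `(0,∞)^d` and `0` elsewhere. -/
noncomputable def expProductDensity (d : ℕ) : (Fin d → ℝ) → ℝ :=
  fun x => if ∀ i, 0 < x i then Real.exp (-(∑ i, x i)) else 0

open Set

theorem essSup_eq_of_forall_le_of_interior_nonempty {α β : Type*} [TopologicalSpace α]
    [MeasurableSpace α] [ConditionallyCompleteLinearOrder β] {μ : Measure α}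
    [μ.IsOpenPosMeasure] {f : α → β} {C : β} (hle : ∀ x, f x ≤ C)
    (hlt : ∀ a < C, (interior {x | a < f x}).Nonempty) :
    essSup f μ = C := by
  rw [essSup_eq_sInf]
  convert csInf_Ici (a := C)
  ext a
  simp only [mem_Ici]
  constructor
  · intro ha
    by_contra! haC
    exact isOpen_interior.measure_ne_zero μ (hlt a haC) (measure_mono_null interior_subset ha)
  · intro ha
    simp [fun x => not_lt.2 ((hle x).trans ha)]

theorem prod_mul_log_prod_eq_sum {ι : Type*} [Fintype ι] [DecidableEq ι] (a : ι → ℝ) :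
    (∏ i, a i) * Real.log (∏ i, a i)
      = ∑ i, ∏ j, a j * (if j = i then Real.log (a j) else 1) := by
  have hterm : ∀ i, ∏ j, a j * (if j = i then Real.log (a j) else 1)
      = (∏ j, a j) * Real.log (a i) := by
    intro i
    rw [Finset.prod_mul_distrib, Finset.prod_ite_eq' Finset.univ i]
    simp
  simp_rw [hterm, ← Finset.mul_sum]
  by_cases hzero : ∃ j, a j = 0
  · obtain ⟨j, hj⟩ := hzero
    simp [Finset.prod_eq_zero (Finset.mem_univ j) hj]
  · push Not at hzero
    rw [Real.log_prod fun j _ => hzero j]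

section Product

variable {ι E : Type*} [Fintype ι] [MeasureSpace E] [SigmaFinite (volume : Measure E)]

theorem integral_prod_rpow {u : E → ℝ} (hu : ∀ t, 0 ≤ u t) (p : ℝ) :
    ∫ x : ι → E, (∏ i, u (x i)) ^ p = (∫ t, u t ^ p) ^ Fintype.card ι := by
  simp_rw [← Real.finsetProd_rpow _ _ (fun i _ => hu _)]
  exact integral_fintype_prod_volume_eq_pow (fun t => u t ^ p)

theorem integral_prod_mul_log_prod {u : E → ℝ} (hu : Integrable u) (hu_one : ∫ t, u t = 1)
    (hu_log : Integrable fun t => u t * Real.log (u t)) :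
    ∫ x : ι → E, (∏ i, u (x i)) * Real.log (∏ i, u (x i))
      = Fintype.card ι * ∫ t, u t * Real.log (u t) := by
  classical
  have hfactor : ∀ i j : ι, Integrable fun t => u t * (if j = i then Real.log (u t) else 1) := by
    intro i j
    split_ifs
    · exact hu_log
    · simpa using hu
  simp_rw [prod_mul_log_prod_eq_sum]
  rw [integral_finsetSum (μ := volume) _ fun i _ => Integrable.fintype_prod fun j => hfactor i j]
  have hterm : ∀ i : ι,
      ∫ x : ι → E, ∏ j, u (x j) * (if j = i then Real.log (u (x j)) else 1)
        = ∫ t, u t * Real.log (u t) := by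
    intro i
    rw [integral_fintype_prod_volume_eq_prod
      (f := fun j t => u t * (if j = i then Real.log (u t) else 1))]
    have hfactor_integral : ∀ j, ∫ t, u t * (if j = i then Real.log (u t) else 1)
        = if j = i then ∫ t, u t * Real.log (u t) else 1 := by
      intro j
      split_ifs <;> simp [hu_one]
    simp only [hfactor_integral, Finset.prod_ite_eq', Finset.mem_univ, if_true]
  simp only [hterm, Finset.sum_const, Finset.card_univ, nsmul_eq_mul]

end Product

theorem integrable_comp_abs {g : ℝ → ℝ} (hg : IntegrableOn g (Ioi 0)) :
    Integrable fun t => g |t| := by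
  have hG : Integrable ((Ioi 0).indicator g) := hg.integrable_indicator measurableSet_Ioi
  refine (hG.add hG.comp_neg).congr ?_
  filter_upwards [Measure.ae_ne volume 0] with t ht
  rcases ht.lt_or_gt with ht | ht
  · simp [indicator, ht, abs_of_neg ht, not_lt.2 ht.le]
  · simp [indicator, ht, abs_of_pos ht, not_lt.2 ht.le]

theorem integrableOn_exp_neg_mul_self_Ioi : IntegrableOn (fun s => exp (-s) * s) (Ioi 0) := by
  have h := Real.GammaIntegral_convergent (s := 2) two_pos
  norm_num at h
  exact h

theorem integral_exp_neg_mul_self_Ioi : ∫ s in Ioi 0, exp (-s) * s = 1 := by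
  have h := Real.Gamma_eq_integral (s := 2) two_pos
  norm_num at h
  exact h.symm

theorem integral_exp_neg_mul_Ioi_zero {p : ℝ} (hp : 0 < p) :
    ∫ s in Ioi 0, exp (-p * s) = p⁻¹ := by
  rw [integral_exp_mul_Ioi (neg_neg_of_pos hp)]
  simp

noncomputable def expDensity : ℝ → ℝ := (Ioi 0).indicator fun t => exp (-t)

noncomputable def laplaceDensity (t : ℝ) : ℝ := exp (-|t|) / 2

theorem expProductDensity_eq_prod {d : ℕ} (x : Fin d → ℝ) :
    expProductDensity d x = ∏ i, expDensity (x i) := by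
  simp only [expProductDensity, expDensity, indicator, mem_Ioi]
  split_ifs with hpos
  · rw [Finset.prod_congr rfl fun i _ => if_pos (hpos i), ← Real.exp_sum, Finset.sum_neg_distrib]
  · push Not at hpos
    obtain ⟨i, hi⟩ := hpos
    exact (Finset.prod_eq_zero (Finset.mem_univ i) (if_neg hi.not_gt)).symm

theorem expDensity_nonneg (t : ℝ) : 0 ≤ expDensity t :=
  indicator_nonneg (fun _ _ => (exp_pos _).le) t

theorem integrable_expDensity : Integrable expDensity :=
  (integrableOn_exp_neg_Ioi 0).integrable_indicator measurableSet_Ioi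

theorem integral_expDensity : ∫ t, expDensity t = 1 := by
  rw [expDensity, integral_indicator measurableSet_Ioi, integral_exp_neg_Ioi_zero]

theorem expDensity_mul_log :
    (fun t => expDensity t * Real.log (expDensity t))
      = (Ioi 0).indicator fun s => -(exp (-s) * s) := by
  funext t
  by_cases ht : 0 < t <;> simp [expDensity, ht]

theorem integrable_expDensity_mul_log :
    Integrable fun t => expDensity t * Real.log (expDensity t) := by
  rw [expDensity_mul_log]
  exact integrableOn_exp_neg_mul_self_Ioi.neg.integrable_indicator measurableSet_Ioi

theorem integral_expDensity_mul_log : ∫ t, expDensity t * Real.log (expDensity t) = -1 := by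
  rw [expDensity_mul_log, integral_indicator measurableSet_Ioi, integral_neg,
    integral_exp_neg_mul_self_Ioi]

theorem integral_expDensity_rpow {p : ℝ} (hp : 0 < p) : ∫ t, expDensity t ^ p = p⁻¹ := by
  have hpow : (fun t => expDensity t ^ p) = (Ioi 0).indicator fun s => exp (-p * s) := by
    funext t
    by_cases ht : 0 < t
    · simp [expDensity, ht, ← Real.exp_mul, mul_comm]
    · simp [expDensity, ht, Real.zero_rpow hp.ne']
  rw [hpow, integral_indicator measurableSet_Ioi, integral_exp_neg_mul_Ioi_zero hp]

theorem laplaceDensity_nonneg (t : ℝ) : 0 ≤ laplaceDensity t := by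
  unfold laplaceDensity
  positivity

theorem laplaceDensity_le_half (t : ℝ) : laplaceDensity t ≤ 2⁻¹ := by
  have : exp (-|t|) ≤ 1 := exp_le_one_iff.2 (neg_nonpos.2 (abs_nonneg t))
  unfold laplaceDensity
  linarith

theorem laplaceDensity_zero : laplaceDensity 0 = 2⁻¹ := by
  simp [laplaceDensity]

theorem continuous_laplaceDensity : Continuous laplaceDensity := by
  unfold laplaceDensity
  fun_prop

theorem integrable_laplaceDensity : Integrable laplaceDensity :=
  integrable_comp_abs (g := fun s => exp (-s) / 2) ((integrableOn_exp_neg_Ioi 0).div_const 2)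

theorem integral_laplaceDensity : ∫ t, laplaceDensity t = 1 := by
  simp only [laplaceDensity]
  rw [integral_comp_abs (f := fun s => exp (-s) / 2), integral_div,
    integral_exp_neg_Ioi_zero]
  norm_num

theorem laplaceDensity_mul_log (t : ℝ) : laplaceDensity t * Real.log (laplaceDensity t)
    = (fun s => -(exp (-s) * s) / 2 - Real.log 2 / 2 * exp (-s)) |t| := by
  simp only [laplaceDensity]
  rw [Real.log_div (exp_ne_zero _) two_ne_zero, Real.log_exp]
  ring

theorem integrable_laplaceDensity_mul_log :
    Integrable fun t => laplaceDensity t * Real.log (laplaceDensity t) := by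
  simp_rw [laplaceDensity_mul_log]
  exact integrable_comp_abs ((integrableOn_exp_neg_mul_self_Ioi.neg.div_const 2).sub
    ((integrableOn_exp_neg_Ioi 0).const_mul _))

theorem integral_laplaceDensity_mul_log :
    ∫ t, laplaceDensity t * Real.log (laplaceDensity t) = -(1 + Real.log 2) := by
  simp_rw [laplaceDensity_mul_log]
  rw [integral_comp_abs (f := fun s => -(exp (-s) * s) / 2 - Real.log 2 / 2 * exp (-s)),
    integral_sub (by exact integrableOn_exp_neg_mul_self_Ioi.neg.div_const 2)
      (by exact (integrableOn_exp_neg_Ioi 0).const_mul _),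
    integral_div, integral_neg, integral_const_mul, integral_exp_neg_mul_self_Ioi,
    integral_exp_neg_Ioi_zero]
  ring

theorem integral_laplaceDensity_rpow {p : ℝ} (hp : 0 < p) :
    ∫ t, laplaceDensity t ^ p = 2 ^ (1 - p) * p⁻¹ := by
  have hpow : ∀ t, laplaceDensity t ^ p = (fun s => exp (-p * s) / 2 ^ p) |t| := by
    intro t
    simp only [laplaceDensity]
    rw [Real.div_rpow (exp_pos _).le zero_le_two, ← Real.exp_mul]
    ring_nf
  simp_rw [hpow]
  rw [integral_comp_abs (f := fun s => exp (-p * s) / 2 ^ p), integral_div,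
    integral_exp_neg_mul_Ioi_zero hp, Real.rpow_sub two_pos, Real.rpow_one]
  ring

theorem expDensity_add_mul_expDensity (a : ℝ) :
    (fun t => expDensity (a + t) * expDensity t)
      = (Ioi (max (-a) 0)).indicator fun t => exp (-a) * exp (-2 * t) := by
  funext t
  have hmem : t ∈ Ioi (max (-a) 0) ↔ 0 < a + t ∧ 0 < t := by
    rw [mem_Ioi, max_lt_iff, neg_lt_iff_pos_add, add_comm]
  by_cases h : 0 < a + t ∧ 0 < t
  · simp only [indicator_of_mem (hmem.2 h), expDensity, indicator_of_mem (mem_Ioi.2 h.1),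
      indicator_of_mem (mem_Ioi.2 h.2), ← Real.exp_add]
    ring_nf
  · rw [indicator_of_notMem (mt hmem.1 h)]
    rcases not_and_or.1 h with h | h <;> simp [expDensity, h]

theorem integral_expDensity_add_mul (a : ℝ) :
    ∫ t, expDensity (a + t) * expDensity t = laplaceDensity a := by
  rw [expDensity_add_mul_expDensity, integral_indicator measurableSet_Ioi, integral_const_mul,
    integral_exp_mul_Ioi (by norm_num : (-2 : ℝ) < 0), laplaceDensity]
  rcases le_or_gt 0 a with ha | ha
  · rw [max_eq_right (neg_nonpos.2 ha), abs_of_nonneg ha, mul_zero, Real.exp_zero]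
    ring
  · rw [max_eq_left (neg_nonneg.2 ha.le), abs_of_neg ha, neg_div_neg_eq, mul_div_assoc',
      ← Real.exp_add]
    ring_nf

theorem integral_expProductDensity_add_mul {d : ℕ} (z : Fin d → ℝ) :
    ∫ x, expProductDensity d (z + x) * expProductDensity d x = ∏ i, laplaceDensity (z i) := by
  simp_rw [expProductDensity_eq_prod, Pi.add_apply, ← Finset.prod_mul_distrib]
  rw [integral_fintype_prod_volume_eq_prod (f := fun i t => expDensity (z i + t) * expDensity t)]
  simp_rw [integral_expDensity_add_mul]

theorem essSup_expProductDensity (d : ℕ) : essSup (expProductDensity d) volume = 1 := by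
  refine essSup_eq_of_forall_le_of_interior_nonempty (fun x => ?_) fun a ha => ?_
  · unfold expProductDensity
    split_ifs with hpos
    · exact exp_le_one_iff.2 (neg_nonpos.2 (Finset.sum_nonneg fun i _ => (hpos i).le))
    · exact zero_le_one
  -- the supremum `1` is not attained, only approached at the corner `0` of the orthant
  set V := {x : Fin d → ℝ | a < exp (-∑ i, x i)}
  set O := univ.pi fun _ : Fin d => Ioi (0 : ℝ)
  have hV : IsOpen V := isOpen_lt continuous_const (by fun_prop)
  have hO : IsOpen O := isOpen_set_pi finite_univ fun _ _ => isOpen_Ioi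
  have hzero : (0 : Fin d → ℝ) ∈ closure O := by simp [O, closure_pi_set, Pi.le_def]
  obtain ⟨x, hxV, hxO⟩ := mem_closure_iff.1 hzero V hV (by simpa [V] using ha)
  refine ⟨x, mem_interior.2 ⟨V ∩ O, fun y ⟨hyV, hyO⟩ => ?_, hV.inter hO, hxV, hxO⟩⟩
  change a < expProductDensity d y
  rwa [expProductDensity, if_pos fun i => mem_Ioi.1 (hyO i (mem_univ i))]

theorem essSup_prod_laplaceDensity (d : ℕ) :
    essSup (fun z : Fin d → ℝ => ∏ i, laplaceDensity (z i)) volume = 2⁻¹ ^ d := by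
  refine essSup_eq_of_forall_le_of_interior_nonempty (fun z => ?_) fun a ha => ?_
  · calc ∏ i, laplaceDensity (z i) ≤ ∏ _i : Fin d, (2⁻¹ : ℝ) :=
          Finset.prod_le_prod (fun i _ => laplaceDensity_nonneg _)
            fun i _ => laplaceDensity_le_half _
      _ = 2⁻¹ ^ d := by simp
  have hopen : IsOpen {z : Fin d → ℝ | a < ∏ i, laplaceDensity (z i)} :=
    isOpen_lt continuous_const
      (continuous_finsetProd _ fun i _ => continuous_laplaceDensity.comp (continuous_apply i))
  rw [hopen.interior_eq]
  exact ⟨0, by simpa [laplaceDensity_zero] using ha⟩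

/-- For iid `X, Y` with the exponential product density on `ℝ^d` and `α ∈ (0,∞]`,
`h_α(X−Y) = h_α(X) + d log 2`. -/
theorem renyi_rogers_shephard_exponential_equality (d : ℕ) (α : ℝ≥0∞) (hα : 0 < α) :
    contRenyiEnt d α
        (fun z => ∫ x, expProductDensity d (z + x) * expProductDensity d x) =
      contRenyiEnt d α (expProductDensity d) + d * Real.log 2 := by
  simp_rw [integral_expProductDensity_add_mul]
  unfold contRenyiEnt
  split_ifs with htop hone
  · rw [essSup_prod_laplaceDensity, essSup_expProductDensity, Real.log_pow, Real.log_inv]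
    simp
  · simp_rw [expProductDensity_eq_prod]
    rw [integral_prod_mul_log_prod integrable_laplaceDensity integral_laplaceDensity
        integrable_laplaceDensity_mul_log,
      integral_prod_mul_log_prod integrable_expDensity integral_expDensity
        integrable_expDensity_mul_log,
      integral_laplaceDensity_mul_log, integral_expDensity_mul_log, Fintype.card_fin]
    ring
  · have hp : 0 < α.toReal := ENNReal.toReal_pos hα.ne' htop
    have hp1 : 1 - α.toReal ≠ 0 :=
      sub_ne_zero.2 fun h => hone ((ENNReal.toReal_eq_one_iff α).1 h.symm)
    simp_rw [expProductDensity_eq_prod]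
    rw [integral_prod_rpow laplaceDensity_nonneg, integral_prod_rpow expDensity_nonneg,
      integral_laplaceDensity_rpow hp, integral_expDensity_rpow hp, Fintype.card_fin,
      Real.log_pow, Real.log_pow, Real.log_mul (by positivity) (by positivity),
      Real.log_rpow two_pos]
    field_simp
    ring
end

section
/- Let X and Y be independent identically distributed random vectors in ℝ^d with a common log-concave density f. Then h_∞(X − Y) = h_2(X); equivalently, the density f_{X−Y}(z) = ∫_{ℝ^d} f(z + x) f(x) dx of X − Y attains its supremum at z = 0, with sup_z f_{X−Y}(z) = f_{X−Y}(0) = ∫_{ℝ^d} f²(x) dx. -/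
open Real MeasureTheory

/-!
Log-concavity at the midpoint of `z + x` and `x` gives `f (z + x) * f x ≤ f (x + z / 2) ^ 2`;
integrating in `x` and translating, `g z = ∫ f (z + x) f x dx ≤ ∫ f ^ 2 = g 0`.

For the essential supremum one needs more: a log-concave density is bounded (a superlevel set
`{ε ≤ f}` of positive measure, contracted by `1/2` towards any `x₀`, carries mass at least
`√(ε f x₀)` times `2⁻ᵈ` its volume), and it is continuous off the boundary of its convex
positivity set, a Lebesgue-null set. Dominated convergence then makes `g` continuous at `0`,
and a function that is lower semicontinuous at its maximum has that maximum as essential supremum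
for any measure charging open sets.
-/

/-- `f` is a probability density on `ℝ^d`. -/
def IsDensity (d : ℕ) (f : (Fin d → ℝ) → ℝ) : Prop :=
  Measurable f ∧ (∀ x, 0 ≤ f x) ∧ ∫ x, f x = 1

/-- `f` is log-concave: `f((1−t)x + ty) ≥ f(x)^{1−t} f(y)^t`. -/
def IsLogConcaveDensity (d : ℕ) (f : (Fin d → ℝ) → ℝ) : Prop :=
  ∀ x y : Fin d → ℝ, ∀ t ∈ Set.Ioo (0 : ℝ) 1,
    f x ^ (1 - t) * f y ^ t ≤ f ((1 - t) • x + t • y)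

open Filter Topology

section LowerSemicontinuous

variable {α β : Type*} [TopologicalSpace α] [MeasurableSpace α] {μ : Measure α}
  [μ.IsOpenPosMeasure] [ConditionallyCompleteLinearOrder β] {g : α → β} {x₀ : α}

theorem LowerSemicontinuousAt.le_of_ae_le (hg : LowerSemicontinuousAt g x₀) {a : β}
    (ha : ∀ᵐ x ∂μ, g x ≤ a) : g x₀ ≤ a := by
  by_contra! h
  refine (μ.measure_pos_of_mem_nhds (hg a h)).ne' (measure_mono_null ?_ (ae_iff.1 ha))
  exact fun x hx => not_le.2 hx

theorem LowerSemicontinuousAt.essSup_eq_of_forall_le (hg : LowerSemicontinuousAt g x₀)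
    (hmax : ∀ x, g x ≤ g x₀) : essSup g μ = g x₀ :=
  le_antisymm (essSup_le_of_ae_le _ (ae_of_all _ hmax) ⟨g x₀, fun _ => hg.le_of_ae_le⟩)
    (le_limsup_of_le ⟨g x₀, ae_of_all _ hmax⟩ fun _ => hg.le_of_ae_le)

end LowerSemicontinuous

theorem MeasureTheory.Measure.addHaar_preimage_smul_sub {E : Type*} [NormedAddCommGroup E]
    [NormedSpace ℝ E] [MeasurableSpace E] [BorelSpace E] [FiniteDimensional ℝ E] (μ : Measure E)
    [μ.IsAddHaarMeasure] {r : ℝ} (hr : r ≠ 0) (x₀ : E) (S : Set E) :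
    μ ((fun y => r • y - x₀) ⁻¹' S) = ENNReal.ofReal |(r ^ Module.finrank ℝ E)⁻¹| * μ S := by
  have h : (fun y => r • y - x₀) ⁻¹' S = (r • ·) ⁻¹' ((· + -x₀) ⁻¹' S) := by
    ext y; simp [sub_eq_add_neg]
  rw [h, Measure.addHaar_preimage_smul μ hr, measure_preimage_add_right]

section LogConcave

variable {d : ℕ} {f : (Fin d → ℝ) → ℝ}

theorem IsDensity.integrable (hf : IsDensity d f) : Integrable f := by
  by_contra h
  simpa [integral_undef h] using hf.2.2

theorem IsDensity.exists_pos_volume_superlevel (hf : IsDensity d f) :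
    ∃ ε > 0, 0 < volume {x | ε ≤ f x} := by
  have hsupp : 0 < volume (Function.support f) := by
    rw [← integral_pos_iff_support_of_nonneg hf.2.1 hf.integrable, hf.2.2]
    exact one_pos
  have hcover : Function.support f ⊆ ⋃ n : ℕ, {x | 1 / ((n : ℝ) + 1) ≤ f x} := by
    intro x hx
    obtain ⟨n, hn⟩ := exists_nat_one_div_lt ((hf.2.1 x).lt_of_ne' hx)
    exact Set.mem_iUnion.2 ⟨n, hn.le⟩
  by_contra! h
  refine hsupp.ne' (measure_mono_null hcover (measure_iUnion_null fun n => ?_))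
  exact nonpos_iff_eq_zero.1 (h _ Nat.one_div_pos_of_nat)

theorem IsLogConcaveDensity.sqrt_mul_sqrt_le (hlc : IsLogConcaveDensity d f) (x y : Fin d → ℝ) :
    √(f x) * √(f y) ≤ f (midpoint ℝ x y) := by
  have h := hlc x y 2⁻¹ ⟨by norm_num, by norm_num⟩
  rw [midpoint_eq_smul_add, sqrt_eq_rpow, sqrt_eq_rpow]
  convert h using 3 <;> norm_num [smul_add]

theorem IsLogConcaveDensity.mul_le_sq_midpoint (hlc : IsLogConcaveDensity d f)
    (hf₀ : ∀ x, 0 ≤ f x) (x y : Fin d → ℝ) : f x * f y ≤ f (midpoint ℝ x y) ^ 2 := by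
  have h := hlc.sqrt_mul_sqrt_le x y
  rw [← sqrt_mul (hf₀ x)] at h
  exact (sqrt_le_iff.1 h).2

theorem IsLogConcaveDensity.sqrt_mul_volume_superlevel_le (hf : IsDensity d f)
    (hlc : IsLogConcaveDensity d f) {ε : ℝ} (hε : 0 < ε) (x₀ : Fin d → ℝ) :
    √(ε * f x₀) * volume.real {x | ε ≤ f x} ≤ 2 ^ d := by
  set S := {x | ε ≤ f x}
  set T := (fun y => (2 : ℝ) • y - x₀) ⁻¹' S
  have hT : MeasurableSet T :=
    ((measurable_id.const_smul (2 : ℝ)).sub measurable_const) (hf.1 measurableSet_Ici)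
  have hvolT : volume T = ENNReal.ofReal ((2 ^ d)⁻¹) * volume S := by
    rw [Measure.addHaar_preimage_smul_sub volume two_ne_zero, Module.finrank_fin_fun,
      abs_of_pos (by positivity)]
  have hTfin : volume T ≠ ⊤ := by
    rw [hvolT]
    exact ENNReal.mul_ne_top ENNReal.ofReal_ne_top (hf.integrable.measure_ge_lt_top hε).ne
  -- every point of `T` is the midpoint of `x₀` and a point of `S`
  have hlower : ∀ y ∈ T, √(ε * f x₀) ≤ f y := by
    intro y hy
    have hmid : midpoint ℝ ((2 : ℝ) • y - x₀) x₀ = y := by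
      rw [midpoint_eq_smul_add]; simp
    calc √(ε * f x₀) ≤ √(f ((2 : ℝ) • y - x₀)) * √(f x₀) := by
          rw [sqrt_mul hε.le]; gcongr; exact hy
      _ ≤ f (midpoint ℝ ((2 : ℝ) • y - x₀) x₀) := hlc.sqrt_mul_sqrt_le _ _
      _ = f y := by rw [hmid]
  have h := (setIntegral_ge_of_const_le_real hT hTfin hlower hf.integrable.integrableOn).trans
    (setIntegral_le_integral hf.integrable (ae_of_all _ hf.2.1))
  rw [hf.2.2, measureReal_def, hvolT, ENNReal.toReal_mul, ENNReal.toReal_ofReal (by positivity),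
    ← measureReal_def] at h
  calc √(ε * f x₀) * volume.real S
      = 2 ^ d * (√(ε * f x₀) * ((2 ^ d)⁻¹ * volume.real S)) := by field_simp
    _ ≤ 2 ^ d * 1 := by gcongr
    _ = 2 ^ d := mul_one _

theorem IsLogConcaveDensity.bddAbove_range (hf : IsDensity d f) (hlc : IsLogConcaveDensity d f) :
    BddAbove (Set.range f) := by
  obtain ⟨ε, hε, hpos⟩ := hf.exists_pos_volume_superlevel
  set m := volume.real {x | ε ≤ f x}
  have hm : 0 < m := ENNReal.toReal_pos hpos.ne' (hf.integrable.measure_ge_lt_top hε).ne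
  refine ⟨(2 ^ d / m) ^ 2 / ε, Set.forall_mem_range.2 fun x => ?_⟩
  have h : √(ε * f x) ≤ 2 ^ d / m := by
    rw [le_div_iff₀ hm]; exact hlc.sqrt_mul_volume_superlevel_le hf hε x
  rw [le_div_iff₀ hε, mul_comm]
  exact (sqrt_le_iff.1 h).2

theorem IsLogConcaveDensity.integrable_sq (hf : IsDensity d f) (hlc : IsLogConcaveDensity d f) :
    Integrable (fun x => f x ^ 2) := by
  obtain ⟨M, hM⟩ := hlc.bddAbove_range hf
  simp_rw [sq]
  refine hf.integrable.bdd_mul hf.1.aestronglyMeasurable (c := M) (ae_of_all _ fun x => ?_)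
  rw [norm_of_nonneg (hf.2.1 x)]
  exact hM ⟨x, rfl⟩

theorem IsLogConcaveDensity.concaveOn_log (hlc : IsLogConcaveDensity d f) :
    ConcaveOn ℝ {x | 0 < f x} (fun x => log (f x)) := by
  have key : ∀ x y : Fin d → ℝ, 0 < f x → 0 < f y → ∀ a b : ℝ, 0 < a → 0 < b → a + b = 1 →
      f x ^ a * f y ^ b ≤ f (a • x + b • y) := by
    intro x y _ _ a b _ hb hab
    obtain rfl : a = 1 - b := by linarith
    exact hlc x y b ⟨hb, by linarith⟩
  refine concaveOn_iff_forall_pos.2 ⟨convex_iff_forall_pos.2 ?_, ?_⟩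
  · intro x hx y hy a b ha hb hab
    exact (mul_pos (rpow_pos_of_pos hx a) (rpow_pos_of_pos hy b)).trans_le
      (key x y hx hy a b ha hb hab)
  · intro x hx y hy a b ha hb hab
    have hpos := mul_pos (rpow_pos_of_pos hx a) (rpow_pos_of_pos hy b)
    calc a • log (f x) + b • log (f y) = log (f x ^ a * f y ^ b) := by
          rw [log_mul (rpow_pos_of_pos hx a).ne' (rpow_pos_of_pos hy b).ne', log_rpow hx,
            log_rpow hy, smul_eq_mul, smul_eq_mul]
      _ ≤ log (f (a • x + b • y)) := log_le_log hpos (key x y hx hy a b ha hb hab)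

theorem IsLogConcaveDensity.ae_continuousAt (hlc : IsLogConcaveDensity d f)
    (hf₀ : ∀ x, 0 ≤ f x) : ∀ᵐ x, ContinuousAt f x := by
  set K := {x | 0 < f x}
  have hconc := hlc.concaveOn_log
  have hfrontier : ∀ᵐ x, x ∉ frontier K := by
    rw [ae_iff]; simpa using hconc.1.addHaar_frontier volume
  filter_upwards [hfrontier] with x hx
  by_cases hxK : x ∈ closure K
  · have hint : x ∈ interior K := by
      by_contra h; exact hx ⟨hxK, h⟩
    have hnhds : interior K ∈ 𝓝 x := isOpen_interior.mem_nhds hint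
    refine ((continuous_exp.continuousAt.comp
      ((hconc.continuousOn_interior x hint).continuousAt hnhds))).congr ?_
    filter_upwards [hnhds] with y hy
    exact exp_log (interior_subset hy : y ∈ K)
  · refine (continuousAt_const (y := (0 : ℝ))).congr ?_
    filter_upwards [isClosed_closure.isOpen_compl.mem_nhds hxK] with y hy
    exact (hf₀ y).eq_of_not_lt fun h => hy (subset_closure h)

theorem IsLogConcaveDensity.integral_mul_shift_le (hf : IsDensity d f)
    (hlc : IsLogConcaveDensity d f) (z : Fin d → ℝ) :
    ∫ x, f (z + x) * f x ≤ ∫ x, f x ^ 2 := by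
  have hmid : ∀ x, midpoint ℝ (z + x) x = x + (2 : ℝ)⁻¹ • z := by
    intro x; rw [midpoint_eq_smul_add]; simp [smul_add]; module
  calc ∫ x, f (z + x) * f x ≤ ∫ x, f (x + (2 : ℝ)⁻¹ • z) ^ 2 := by
        refine integral_mono_of_nonneg (ae_of_all _ fun x => mul_nonneg (hf.2.1 _) (hf.2.1 _))
          ((hlc.integrable_sq hf).comp_add_right _) (ae_of_all _ fun x => ?_)
        simpa only [hmid] using hlc.mul_le_sq_midpoint hf.2.1 (z + x) x
    _ = ∫ x, f x ^ 2 := integral_add_right_eq_self (fun x => f x ^ 2) _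

theorem IsLogConcaveDensity.continuousAt_integral_mul_shift (hf : IsDensity d f)
    (hlc : IsLogConcaveDensity d f) : ContinuousAt (fun z => ∫ x, f (z + x) * f x) 0 := by
  obtain ⟨M, hM⟩ := hlc.bddAbove_range hf
  refine continuousAt_of_dominated (bound := fun x => M * f x)
    (.of_forall fun z => ((hf.1.comp (measurable_const_add z)).mul hf.1).aestronglyMeasurable)
    (.of_forall fun z => ae_of_all _ fun x => ?_) (hf.integrable.const_mul M) ?_
  · rw [norm_of_nonneg (mul_nonneg (hf.2.1 _) (hf.2.1 _))]
    exact mul_le_mul_of_nonneg_right (hM ⟨_, rfl⟩) (hf.2.1 x)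
  · filter_upwards [hlc.ae_continuousAt hf.2.1] with x hx
    exact (hx.comp_of_eq (continuous_add_const x).continuousAt (zero_add x)).mul
      continuousAt_const

end LogConcave

/-- For iid `X, Y` with a common log-concave density `f` on `ℝ^d`, the density
`g(z) = ∫ f(z+x)f(x) dx` of `X − Y` attains its supremum at `z = 0`, with
`sup_z g(z) = g(0) = ∫ f²`; consequently `h_∞(X−Y) = h_2(X)`, i.e.
`−log ess sup g = −log ∫ f²`. -/
theorem minEntropy_difference_eq_collision (d : ℕ) (f : (Fin d → ℝ) → ℝ)
    (hf : IsDensity d f) (hlc : IsLogConcaveDensity d f) :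
    (⨆ z : Fin d → ℝ, ∫ x, f (z + x) * f x) = (∫ x, f (0 + x) * f x) ∧
    (∫ x, f (0 + x) * f x) = (∫ x, f x ^ 2) ∧
    -Real.log (essSup (fun z => ∫ x, f (z + x) * f x) volume) =
      -Real.log (∫ x, f x ^ 2) := by
  set g := fun z : Fin d → ℝ => ∫ x, f (z + x) * f x
  have hg₀ : g 0 = ∫ x, f x ^ 2 := by simp only [g, zero_add, sq]
  have hmax : ∀ z, g z ≤ g 0 := fun z => hg₀ ▸ hlc.integral_mul_shift_le hf z
  have hess : essSup g volume = g 0 :=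
    (hlc.continuousAt_integral_mul_shift hf).lowerSemicontinuousAt.essSup_eq_of_forall_le hmax
  refine ⟨?_, hg₀, by rw [hess, hg₀]⟩
  exact le_antisymm (ciSup_le hmax) (le_ciSup ⟨g 0, Set.forall_mem_range.2 hmax⟩ 0)
end
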